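/- arXiv:math/0312437 — 5 statements merged into one kernel-verified Lean document; each statement's English description precedes it below -/
import Mathlib

section
/- Let U be uniform on [0,1], and let s_ℓ, s_r be, conditionally on ⌈nU⌉ = m, independent with s_ℓ ~ Binomial(m-1, p) and s_r ~ Binomial(n-m, p). Set Z = ⌈nU⌉ - s_ℓ + s_r. Then E[(Z-1)^2 + (n-Z)^2] ≤ E[(⌈nU⌉-1)^2 + (n-⌈nU⌉)^2] = (n-1)(2n-1)/3 ≤ (2/3)n^2. -/
open MeasureTheory ProbabilityTheory
open Finset

/-- Binomial(n,p) probability of value `k`, as a real number. -/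
noncomputable def binomProb (n : ℕ) (p : ℝ) (k : ℕ) : ℝ :=
  (n.choose k : ℝ) * p ^ k * (1 - p) ^ (n - k)


lemma binomProb_zero_of_lt {N k : ℕ} (p : ℝ) (h : N < k) : binomProb N p k = 0 := by
  simp [binomProb, Nat.choose_eq_zero_of_lt h]

lemma binomProb_nonneg {N k : ℕ} {p : ℝ} (hp : p ∈ Set.Icc (0:ℝ) 1) : 0 ≤ binomProb N p k := by
  have h1 : (0:ℝ) ≤ p := hp.1
  have h2 : (0:ℝ) ≤ 1 - p := by linarith [hp.2]
  exact mul_nonneg (mul_nonneg (by positivity) (pow_nonneg h1 _)) (pow_nonneg h2 _)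

lemma binom_sum (N : ℕ) (p : ℝ) : ∑ k ∈ range (N+1), binomProb N p k = 1 := by
  have h := add_pow p (1-p) N
  simp only [add_sub_cancel, one_pow] at h
  rw [h]
  exact Finset.sum_congr rfl (fun k _ => by rw [binomProb]; ring)

lemma binom_step {M k : ℕ} (p : ℝ) :
    ((k:ℝ)+1) * binomProb (M+1) p (k+1) = ((M:ℝ)+1) * p * binomProb M p k := by
  have hc : (((M+1).choose (k+1) : ℕ) : ℝ) * ((k:ℝ)+1) = ((M:ℝ)+1) * (M.choose k : ℝ) := by
    have h2 : ((M+1) * M.choose k : ℕ) = ((M+1).choose (k+1) * (k+1) : ℕ) :=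
      Nat.add_one_mul_choose_eq M k
    have h2' : ((M:ℝ)+1) * (M.choose k : ℝ) = ((M+1).choose (k+1) : ℝ) * ((k:ℝ)+1) := by
      exact_mod_cast h2
    linear_combination (-1 : ℝ) * h2'
  simp only [binomProb]
  have hsub : M + 1 - (k+1) = M - k := by omega
  rw [hsub, pow_succ]
  linear_combination (p ^ k * p * (1 - p) ^ (M - k)) * hc

lemma binom_sum1 (N : ℕ) (p : ℝ) :
    ∑ k ∈ range (N+1), (k:ℝ) * binomProb N p k = N * p := by
  cases N with
  | zero => simp
  | succ M =>
    rw [Finset.sum_range_succ']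
    simp only [Nat.cast_zero, zero_mul, add_zero]
    calc ∑ k ∈ range (M+1), ((k+1 : ℕ):ℝ) * binomProb (M+1) p (k+1)
        = ∑ k ∈ range (M+1), ((M:ℝ)+1) * p * binomProb M p k := by
          refine Finset.sum_congr rfl (fun k _ => ?_)
          rw [← binom_step p]; push_cast; ring
      _ = ((M:ℝ)+1) * p * ∑ k ∈ range (M+1), binomProb M p k := by rw [Finset.mul_sum]
      _ = (↑(M+1)) * p := by rw [binom_sum]; push_cast; ring

lemma binom_sum2 (N : ℕ) (p : ℝ) :
    ∑ k ∈ range (N+1), (k:ℝ) * ((k:ℝ)-1) * binomProb N p k = N * ((N:ℝ)-1) * p^2 := by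
  match N with
  | 0 => simp
  | 1 => norm_num [Finset.sum_range_succ]
  | (M+2) =>
    rw [Finset.sum_range_succ']
    rw [Finset.sum_range_succ']
    have h0 : ((0:ℕ):ℝ) * (((0:ℕ):ℝ)-1) * binomProb (M+2) p 0 = 0 := by norm_num
    have h01 : ((0+1:ℕ):ℝ) * (((0+1:ℕ):ℝ)-1) * binomProb (M+2) p (0+1) = 0 := by norm_num
    rw [h0, h01, add_zero, add_zero]
    calc ∑ k ∈ range (M+1), ((k+1+1 : ℕ):ℝ) * (((k+1+1 : ℕ):ℝ)-1) * binomProb (M+2) p (k+1+1)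
        = ∑ k ∈ range (M+1), ((M:ℝ)+2) * (((M:ℝ)+1) * p * (p * binomProb M p k)) := by
          refine Finset.sum_congr rfl (fun k _ => ?_)
          have h1 := binom_step (M := M+1) (k := k+1) p
          simp only [show M+1+1 = M+2 from rfl] at h1
          push_cast at h1 ⊢
          have h2 := binom_step (M := M) (k := k) p
          linear_combination ((k:ℝ)+1) * h1 + ((M:ℝ)+2) * p * h2
      _ = ((M:ℝ)+2) * ((M:ℝ)+1) * p^2 * ∑ k ∈ range (M+1), binomProb M p k := by
          rw [Finset.mul_sum]; refine Finset.sum_congr rfl (fun k _ => by ring)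
      _ = (↑(M+2)) * ((↑(M+2):ℝ)-1) * p^2 := by rw [binom_sum]; push_cast; ring

lemma binom_sum_ext (N M : ℕ) (h : N ≤ M) (p : ℝ) (f : ℕ → ℝ) :
    ∑ k ∈ range (M+1), f k * binomProb N p k
      = ∑ k ∈ range (N+1), f k * binomProb N p k := by
  refine (Finset.sum_subset (by simp; omega) (fun k _ hk => ?_)).symm
  rw [binomProb_zero_of_lt p (by simp at hk; omega), mul_zero]

lemma binom_quad (N M : ℕ) (h : N ≤ M) (p : ℝ) (f : ℕ → ℝ) (c0 c1 c2 : ℝ)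
    (hf : ∀ k : ℕ, f k = c0 + c1 * k + c2 * ((k:ℝ) * ((k:ℝ)-1))) :
    ∑ k ∈ range (M+1), f k * binomProb N p k
      = c0 + c1 * ((N:ℝ)*p) + c2 * ((N:ℝ)*((N:ℝ)-1)*p^2) := by
  rw [binom_sum_ext N M h]
  have : ∀ k ∈ range (N+1), f k * binomProb N p k
      = c0 * binomProb N p k + c1 * ((k:ℝ) * binomProb N p k)
        + c2 * ((k:ℝ) * ((k:ℝ)-1) * binomProb N p k) := by
    intro k _; rw [hf k]; ring
  rw [Finset.sum_congr rfl this, Finset.sum_add_distrib, Finset.sum_add_distrib,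
    ← Finset.mul_sum, ← Finset.mul_sum, ← Finset.mul_sum, binom_sum, binom_sum1, binom_sum2]
  ring

lemma binom_quad2 (Na Nb M : ℕ) (hNa : Na ≤ M) (hNb : Nb ≤ M) (p : ℝ) (f : ℕ → ℕ → ℝ)
    (c0 ca cb caa cbb cab : ℝ)
    (hf : ∀ a b : ℕ, f a b = c0 + ca*(a:ℝ) + cb*(b:ℝ) + caa*((a:ℝ)*((a:ℝ)-1))
        + cbb*((b:ℝ)*((b:ℝ)-1)) + cab*((a:ℝ)*(b:ℝ))) :
    ∑ a ∈ range (M+1), ∑ b ∈ range (M+1), f a b * (binomProb Na p a * binomProb Nb p b)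
      = c0 + ca*((Na:ℝ)*p) + cb*((Nb:ℝ)*p) + caa*((Na:ℝ)*((Na:ℝ)-1)*p^2)
        + cbb*((Nb:ℝ)*((Nb:ℝ)-1)*p^2) + cab*(((Na:ℝ)*p)*((Nb:ℝ)*p)) := by
  have hinner : ∀ a : ℕ,
      ∑ b ∈ range (M+1), f a b * (binomProb Na p a * binomProb Nb p b)
        = ((c0 + ca*(a:ℝ) + caa*((a:ℝ)*((a:ℝ)-1)) + cb*((Nb:ℝ)*p)
            + cab*((a:ℝ)*((Nb:ℝ)*p)) + cbb*((Nb:ℝ)*((Nb:ℝ)-1)*p^2)) ) * binomProb Na p a := by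
    intro a
    have := binom_quad Nb M hNb p (fun b => f a b * binomProb Na p a)
      ((c0 + ca*(a:ℝ) + caa*((a:ℝ)*((a:ℝ)-1))) * binomProb Na p a)
      ((cb + cab*(a:ℝ)) * binomProb Na p a)
      (cbb * binomProb Na p a)
      (fun b => by show f a b * binomProb Na p a = _; rw [hf a b]; ring)
    calc ∑ b ∈ range (M+1), f a b * (binomProb Na p a * binomProb Nb p b)
        = ∑ b ∈ range (M+1), (f a b * binomProb Na p a) * binomProb Nb p b :=
          Finset.sum_congr rfl (fun b _ => by ring)
      _ = _ := by rw [this]; ring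
  rw [Finset.sum_congr rfl (fun a _ => hinner a)]
  rw [binom_quad Na M hNa p _
    (c0 + cb*((Nb:ℝ)*p) + cbb*((Nb:ℝ)*((Nb:ℝ)-1)*p^2))
    (ca + cab*((Nb:ℝ)*p)) caa (fun a => by ring)]
  ring

lemma sum_quad_Icc (n : ℕ) (c0 c1 c2 : ℝ) (f : ℕ → ℝ)
    (hf : ∀ m : ℕ, f m = c0 + c1*(m:ℝ) + c2*(m:ℝ)^2) :
    ∑ m ∈ Finset.Icc 1 n, f m
      = c0*(n:ℝ) + c1*((n:ℝ)*((n:ℝ)+1)/2) + c2*((n:ℝ)*((n:ℝ)+1)*(2*(n:ℝ)+1)/6) := by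
  induction n with
  | zero => simp
  | succ k ih =>
    have hIcc : Finset.Icc 1 (k+1) = insert (k+1) (Finset.Icc 1 k) := by
      exact (Finset.insert_Icc_right_eq_Icc_add_one (by omega)).symm
    rw [hIcc, Finset.sum_insert (by simp), ih, hf (k+1)]
    push_cast
    ring

lemma integral_eq_sum {Ω : Type*} [MeasurableSpace Ω] (P : Measure Ω)
    [IsProbabilityMeasure P] (n : ℕ) (hn : 1 ≤ n) (p : ℝ) (hp : p ∈ Set.Icc (0:ℝ) 1)
    (U : Ω → ℝ) (sl sr : Ω → ℕ)
    (hUm : Measurable U) (hslm : Measurable sl) (hsrm : Measurable sr)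
    (hU : Measure.map U P = volume.restrict (Set.Icc (0:ℝ) 1))
    (hjoint : ∀ m a b : ℕ,
      P {ω | ⌈(n:ℝ) * U ω⌉ = (m : ℤ) ∧ sl ω = a ∧ sr ω = b}
        = P {ω | ⌈(n:ℝ) * U ω⌉ = (m : ℤ)}
          * ENNReal.ofReal (binomProb (m - 1) p a) * ENNReal.ofReal (binomProb (n - m) p b))
    (g : ℤ → ℕ → ℕ → ℝ) :
    ∫ ω, g ⌈(n:ℝ) * U ω⌉ (sl ω) (sr ω) ∂P
      = ∑ m ∈ Finset.Icc 1 n, ∑ a ∈ Finset.range (n+1), ∑ b ∈ Finset.range (n+1),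
          g (m:ℤ) a b * ((1/(n:ℝ)) * binomProb (m-1) p a * binomProb (n-m) p b) := by
  have hn0 : (0:ℝ) < n := by exact_mod_cast hn
  -- description of the ceiling event
  have hset : ∀ m : ℤ, {ω | ⌈(n:ℝ) * U ω⌉ = m}
      = U ⁻¹' Set.Ioc (((m:ℝ)-1)/n) ((m:ℝ)/n) := by
    intro m
    ext ω
    simp only [Set.mem_setOf_eq, Set.mem_preimage, Set.mem_Ioc, Int.ceil_eq_iff]
    constructor
    · rintro ⟨h1, h2⟩
      exact ⟨(div_lt_iff₀ hn0).2 (by linarith), (le_div_iff₀ hn0).2 (by linarith)⟩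
    · rintro ⟨h1, h2⟩
      have := (div_lt_iff₀ hn0).1 h1
      have := (le_div_iff₀ hn0).1 h2
      exact ⟨by linarith, by linarith⟩
  have hP1 : ∀ m : ℕ, 1 ≤ m → m ≤ n →
      P {ω | ⌈(n:ℝ) * U ω⌉ = (m:ℤ)} = ENNReal.ofReal (1/(n:ℝ)) := by
    intro m h1 h2
    rw [hset, ← Measure.map_apply hUm measurableSet_Ioc, hU,
      Measure.restrict_apply measurableSet_Ioc]
    have hm1 : (1:ℝ) ≤ (m:ℝ) := by exact_mod_cast h1
    have hm2 : (m:ℝ) ≤ (n:ℝ) := by exact_mod_cast h2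
    have hsub : Set.Ioc ((((m:ℤ):ℝ)-1)/n) (((m:ℤ):ℝ)/n) ⊆ Set.Icc (0:ℝ) 1 := by
      rintro x ⟨hx1, hx2⟩
      have hx1' : ((m:ℝ)-1)/n < x := by push_cast at hx1; exact hx1
      have hx2' : x ≤ (m:ℝ)/n := by push_cast at hx2; exact hx2
      have h0 : (0:ℝ) ≤ ((m:ℝ)-1)/n := div_nonneg (by linarith) (le_of_lt hn0)
      have hle1 : (m:ℝ)/n ≤ 1 := by rw [div_le_one hn0]; exact hm2
      exact ⟨by linarith, by linarith⟩
    rw [Set.inter_eq_left.mpr hsub, Real.volume_Ioc]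
    congr 1
    push_cast
    field_simp
    ring
  have hC : ∀ m : ℤ, MeasurableSet {ω | ⌈(n:ℝ) * U ω⌉ = m} := by
    intro m; rw [hset]; exact hUm measurableSet_Ioc
  have hP0 : ∀ m : ℤ, (m < 1 ∨ (n:ℤ) < m) → P {ω | ⌈(n:ℝ) * U ω⌉ = m} = 0 := by
    intro m hm
    rw [hset, ← Measure.map_apply hUm measurableSet_Ioc, hU,
      Measure.restrict_apply measurableSet_Ioc]
    rcases hm with hm | hm
    · refine measure_mono_null (t := {0}) ?_ Real.volume_singleton
      rintro x ⟨⟨hx1, hx2⟩, hx3, hx4⟩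
      have hmr : (m:ℝ) ≤ 0 := by exact_mod_cast (by omega : m ≤ 0)
      have hq : (m:ℝ)/n ≤ 0 := div_nonpos_iff.2 (Or.inr ⟨hmr, le_of_lt hn0⟩)
      have : x ≤ 0 := hx2.trans hq
      simp [le_antisymm this hx3]
    · refine measure_mono_null (t := ∅) ?_ (measure_empty)
      rintro x ⟨⟨hx1, hx2⟩, hx3, hx4⟩
      have hmr : (n:ℝ) + 1 ≤ (m:ℝ) := by exact_mod_cast (by omega : (n:ℤ) + 1 ≤ m)
      have : (1:ℝ) ≤ ((m:ℝ)-1)/n := by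
        rw [le_div_iff₀ hn0]; linarith
      exact absurd (this.trans_lt hx1).trans_le (by intro hc; linarith [hc hx4])
  classical
  set E : ℤ → ℕ → ℕ → Set Ω :=
    fun m a b => {ω | ⌈(n:ℝ) * U ω⌉ = m ∧ sl ω = a ∧ sr ω = b} with hE
  have hEmeas : ∀ (m : ℤ) (a b : ℕ), MeasurableSet (E m a b) := by
    intro m a b
    have : E m a b = {ω | ⌈(n:ℝ) * U ω⌉ = m} ∩ sl ⁻¹' {a} ∩ sr ⁻¹' {b} := by
      ext ω; simp [hE, Set.mem_inter_iff, and_assoc]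
    rw [this]
    exact ((hC m).inter (hslm (measurableSet_singleton a))).inter
      (hsrm (measurableSet_singleton b))
  have hjoint' : ∀ m a b : ℕ, P (E (m:ℤ) a b)
      = P {ω | ⌈(n:ℝ) * U ω⌉ = (m:ℤ)} * ENNReal.ofReal (binomProb (m - 1) p a)
        * ENNReal.ofReal (binomProb (n - m) p b) := fun m a b => hjoint m a b
  have hPE0 : ∀ (m : ℤ) (a b : ℕ), ¬(1 ≤ m ∧ m ≤ (n:ℤ) ∧ a ≤ n ∧ b ≤ n) → P (E m a b) = 0 := by
    intro m a b hbad
    by_cases h1 : 1 ≤ m ∧ m ≤ (n:ℤ)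
    · obtain ⟨hm1, hm2⟩ := h1
      have hmn : m = ((m.toNat : ℕ) : ℤ) := (Int.toNat_of_nonneg (by omega)).symm
      rw [hmn]
      rw [hjoint' m.toNat a b]
      rcases (by omega : ¬(a ≤ n) ∨ ¬(b ≤ n)) with hab | hab
      · have : binomProb (m.toNat - 1) p a = 0 :=
          binomProb_zero_of_lt p (by omega)
        rw [this]
        simp
      · have : binomProb (n - m.toNat) p b = 0 :=
          binomProb_zero_of_lt p (by omega)
        rw [this]
        simp
    · refine measure_mono_null (fun ω hω => hω.1) (hP0 m (by omega))
  have hae : ∀ᵐ ω ∂P, 1 ≤ ⌈(n:ℝ) * U ω⌉ ∧ ⌈(n:ℝ) * U ω⌉ ≤ (n:ℤ) ∧ sl ω ≤ n ∧ sr ω ≤ n := by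
    rw [ae_iff]
    set S : Set (ℤ × ℕ × ℕ) := {s | ¬(1 ≤ s.1 ∧ s.1 ≤ (n:ℤ) ∧ s.2.1 ≤ n ∧ s.2.2 ≤ n)} with hS
    have hcov : {ω | ¬(1 ≤ ⌈(n:ℝ) * U ω⌉ ∧ ⌈(n:ℝ) * U ω⌉ ≤ (n:ℤ) ∧ sl ω ≤ n ∧ sr ω ≤ n)}
        ⊆ ⋃ s ∈ S, E s.1 s.2.1 s.2.2 := by
      intro ω hω
      exact Set.mem_biUnion (show (⌈(n:ℝ)*U ω⌉, sl ω, sr ω) ∈ S from hω) ⟨rfl, rfl, rfl⟩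
    refine measure_mono_null hcov ?_
    rw [measure_biUnion_null_iff (S.to_countable)]
    intro s hs
    exact hPE0 s.1 s.2.1 s.2.2 hs
  set Fn : Finset (ℕ × ℕ × ℕ) := Finset.Icc 1 n ×ˢ (range (n+1) ×ˢ range (n+1)) with hFn
  have hFeq : (fun ω => g ⌈(n:ℝ) * U ω⌉ (sl ω) (sr ω))
      =ᵐ[P] (fun ω => ∑ s ∈ Fn,
        Set.indicator (E (s.1:ℤ) s.2.1 s.2.2) (fun _ => g (s.1:ℤ) s.2.1 s.2.2) ω) := by
    filter_upwards [hae] with ω hω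
    obtain ⟨h1, h2, h3, h4⟩ := hω
    have hm0 : ((⌈(n:ℝ)*U ω⌉.toNat : ℕ) : ℤ) = ⌈(n:ℝ)*U ω⌉ := Int.toNat_of_nonneg (by omega)
    symm
    rw [Finset.sum_eq_single (⌈(n:ℝ)*U ω⌉.toNat, sl ω, sr ω)]
    · have hωmem : ω ∈ E ((⌈(n:ℝ)*U ω⌉.toNat : ℕ):ℤ) (sl ω) (sr ω) := ⟨hm0.symm, rfl, rfl⟩
      rw [Set.indicator_of_mem hωmem, hm0]
    · rintro ⟨m, a, b⟩ hmem hne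
      apply Set.indicator_of_notMem
      rintro ⟨hq1, hq2, hq3⟩
      apply hne
      have hmq : m = ⌈(n:ℝ)*U ω⌉.toNat := by omega
      simp [Prod.ext_iff, hmq, hq2, hq3]
    · intro hnot
      exfalso
      apply hnot
      simp only [hFn, Finset.mem_product, Finset.mem_Icc, Finset.mem_range]
      omega
  rw [integral_congr_ae hFeq]
  rw [integral_finset_sum Fn (fun s _ => (integrable_const _).indicator (hEmeas _ _ _))]
  have hterm : ∀ s ∈ Fn,
      (∫ ω, Set.indicator (E (s.1:ℤ) s.2.1 s.2.2) (fun _ => g (s.1:ℤ) s.2.1 s.2.2) ω ∂P)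
      = g (s.1:ℤ) s.2.1 s.2.2
          * ((1/(n:ℝ)) * binomProb (s.1-1) p s.2.1 * binomProb (n-s.1) p s.2.2) := by
    rintro ⟨m, a, b⟩ hmem
    simp only [hFn, Finset.mem_product, Finset.mem_Icc, Finset.mem_range] at hmem
    rw [integral_indicator_const _ (hEmeas _ _ _)]
    have hn1 : (0:ℝ) ≤ 1/(n:ℝ) := by positivity
    have hB1 : (0:ℝ) ≤ binomProb (m-1) p a := binomProb_nonneg hp
    have hB2 : (0:ℝ) ≤ binomProb (n-m) p b := binomProb_nonneg hp
    have hPEq : P (E (m:ℤ) a b)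
        = ENNReal.ofReal ((1/(n:ℝ)) * binomProb (m-1) p a * binomProb (n-m) p b) := by
      rw [hjoint' m a b, hP1 m hmem.1.1 hmem.1.2,
        ← ENNReal.ofReal_mul hn1, ← ENNReal.ofReal_mul (by positivity)]
    rw [measureReal_def, hPEq, ENNReal.toReal_ofReal (by positivity), smul_eq_mul, mul_comm]
  rw [Finset.sum_congr rfl hterm, Finset.sum_product]
  exact Finset.sum_congr rfl (fun m _ => by rw [Finset.sum_product])

lemma inner2 (n m : ℕ) (p : ℝ) (hm1 : 1 ≤ m) (hm2 : m ≤ n) :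
    ∑ a ∈ range (n+1), ∑ b ∈ range (n+1),
      (((((m:ℕ):ℤ):ℝ) - 1)^2 + ((n:ℝ) - (((m:ℕ):ℤ):ℝ))^2)
        * ((1/(n:ℝ)) * binomProb (m-1) p a * binomProb (n-m) p b)
    = (1/(n:ℝ)) * (((m:ℝ)-1)^2 + ((n:ℝ)-(m:ℝ))^2) := by
  have h := binom_quad2 (m-1) (n-m) n (by omega) (by omega) p
    (fun a b => ((((m:ℝ)) - 1)^2 + ((n:ℝ) - (m:ℝ))^2) * (1/(n:ℝ)))
    (((((m:ℝ)) - 1)^2 + ((n:ℝ) - (m:ℝ))^2) * (1/(n:ℝ))) 0 0 0 0 0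
    (fun a b => by push_cast; ring)
  calc ∑ a ∈ range (n+1), ∑ b ∈ range (n+1),
      (((((m:ℕ):ℤ):ℝ) - 1)^2 + ((n:ℝ) - (((m:ℕ):ℤ):ℝ))^2)
        * ((1/(n:ℝ)) * binomProb (m-1) p a * binomProb (n-m) p b)
      = ∑ a ∈ range (n+1), ∑ b ∈ range (n+1),
        (((((m:ℝ)) - 1)^2 + ((n:ℝ) - (m:ℝ))^2) * (1/(n:ℝ)))
          * (binomProb (m-1) p a * binomProb (n-m) p b) := by
        refine Finset.sum_congr rfl (fun a _ => Finset.sum_congr rfl (fun b _ => ?_))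
        push_cast
        ring
    _ = _ := by rw [h]; ring

lemma inner1 (n m : ℕ) (p : ℝ) (hm1 : 1 ≤ m) (hm2 : m ≤ n) :
    ∑ a ∈ range (n+1), ∑ b ∈ range (n+1),
      (((((m:ℕ):ℤ):ℝ) - (a:ℝ) + (b:ℝ) - 1)^2
        + ((n:ℝ) - ((((m:ℕ):ℤ):ℝ) - (a:ℝ) + (b:ℝ)))^2)
        * ((1/(n:ℝ)) * binomProb (m-1) p a * binomProb (n-m) p b)
    = (1/(n:ℝ)) * ((((m:ℝ)-1)^2 + ((n:ℝ)-(m:ℝ))^2)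
        + 2*p*(1-p)*(((n:ℝ)-1) - (2*(m:ℝ)-(n:ℝ)-1)^2)) := by
  set X : ℝ := (m:ℝ) - 1 with hX
  set Y : ℝ := (n:ℝ) - (m:ℝ) with hY
  have hcastX : ((m-1 : ℕ) : ℝ) = X := by rw [hX]; push_cast [hm1]; ring
  have hcastY : ((n-m : ℕ) : ℝ) = Y := by rw [hY]; push_cast [hm2]; ring
  have h := binom_quad2 (m-1) (n-m) n (by omega) (by omega) p
    (fun a b => ((((m:ℝ)) - (a:ℝ) + (b:ℝ) - 1)^2
        + ((n:ℝ) - (((m:ℝ)) - (a:ℝ) + (b:ℝ)))^2) * (1/(n:ℝ)))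
    ((X^2 + Y^2) * (1/(n:ℝ))) ((2*Y - 2*X + 2) * (1/(n:ℝ))) ((2*X - 2*Y + 2) * (1/(n:ℝ)))
    (2 * (1/(n:ℝ))) (2 * (1/(n:ℝ))) ((-4) * (1/(n:ℝ)))
    (fun a b => by rw [hX, hY]; push_cast; ring)
  rw [hcastX, hcastY] at h
  calc ∑ a ∈ range (n+1), ∑ b ∈ range (n+1),
      (((((m:ℕ):ℤ):ℝ) - (a:ℝ) + (b:ℝ) - 1)^2
        + ((n:ℝ) - ((((m:ℕ):ℤ):ℝ) - (a:ℝ) + (b:ℝ)))^2)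
        * ((1/(n:ℝ)) * binomProb (m-1) p a * binomProb (n-m) p b)
      = ∑ a ∈ range (n+1), ∑ b ∈ range (n+1),
        (((((m:ℝ)) - (a:ℝ) + (b:ℝ) - 1)^2
          + ((n:ℝ) - (((m:ℝ)) - (a:ℝ) + (b:ℝ)))^2) * (1/(n:ℝ)))
          * (binomProb (m-1) p a * binomProb (n-m) p b) := by
        refine Finset.sum_congr rfl (fun a _ => Finset.sum_congr rfl (fun b _ => ?_))
        push_cast
        ring
    _ = _ := by rw [h, hX, hY]; ring

/-- Let `U` be uniform on `[0,1]` and, conditionally on `⌈nU⌉ = m`, let `sℓ, sr` be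
independent `Binomial(m-1,p)` and `Binomial(n-m,p)`. With `Z = ⌈nU⌉ - sℓ + sr`,
`E[(Z-1)² + (n-Z)²] ≤ E[(⌈nU⌉-1)² + (n-⌈nU⌉)²] = (n-1)(2n-1)/3 ≤ (2/3)n²`. -/
theorem balanced_pivot_square_expectation {Ω : Type*} [MeasurableSpace Ω] (P : Measure Ω)
    [IsProbabilityMeasure P] (n : ℕ) (hn : 1 ≤ n) (p : ℝ) (hp : p ∈ Set.Icc (0:ℝ) 1)
    (U : Ω → ℝ) (sl sr : Ω → ℕ)
    (hUm : Measurable U) (hslm : Measurable sl) (hsrm : Measurable sr)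
    (hU : Measure.map U P = volume.restrict (Set.Icc (0:ℝ) 1))
    (hjoint : ∀ m a b : ℕ,
      P {ω | ⌈(n:ℝ) * U ω⌉ = (m : ℤ) ∧ sl ω = a ∧ sr ω = b}
        = P {ω | ⌈(n:ℝ) * U ω⌉ = (m : ℤ)}
          * ENNReal.ofReal (binomProb (m - 1) p a) * ENNReal.ofReal (binomProb (n - m) p b)) :
    (∫ ω, ((((⌈(n:ℝ) * U ω⌉ : ℤ) : ℝ) - (sl ω : ℝ) + (sr ω : ℝ) - 1)^2
          + ((n:ℝ) - (((⌈(n:ℝ) * U ω⌉ : ℤ) : ℝ) - (sl ω : ℝ) + (sr ω : ℝ)))^2) ∂P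
        ≤ ∫ ω, ((((⌈(n:ℝ) * U ω⌉ : ℤ) : ℝ) - 1)^2
          + ((n:ℝ) - ((⌈(n:ℝ) * U ω⌉ : ℤ) : ℝ))^2) ∂P)
    ∧ (∫ ω, ((((⌈(n:ℝ) * U ω⌉ : ℤ) : ℝ) - 1)^2
          + ((n:ℝ) - ((⌈(n:ℝ) * U ω⌉ : ℤ) : ℝ))^2) ∂P
        = ((n:ℝ) - 1) * (2*(n:ℝ) - 1) / 3)
    ∧ ((n:ℝ) - 1) * (2*(n:ℝ) - 1) / 3 ≤ (2/3) * (n:ℝ)^2 := by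
  have hn0 : (0:ℝ) < n := by exact_mod_cast hn
  have hq : (0:ℝ) ≤ p * (1-p) := mul_nonneg hp.1 (by linarith [hp.2])
  have e1 : (∫ ω, ((((⌈(n:ℝ) * U ω⌉ : ℤ) : ℝ) - (sl ω : ℝ) + (sr ω : ℝ) - 1)^2
          + ((n:ℝ) - (((⌈(n:ℝ) * U ω⌉ : ℤ) : ℝ) - (sl ω : ℝ) + (sr ω : ℝ)))^2) ∂P)
      = ∑ m ∈ Finset.Icc 1 n, (1/(n:ℝ)) * ((((m:ℝ)-1)^2 + ((n:ℝ)-(m:ℝ))^2)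
          + 2*p*(1-p)*(((n:ℝ)-1) - (2*(m:ℝ)-(n:ℝ)-1)^2)) := by
    have h := integral_eq_sum P n hn p hp U sl sr hUm hslm hsrm hU hjoint
      (fun m a b => (((m:ℤ):ℝ) - (a:ℝ) + (b:ℝ) - 1)^2
        + ((n:ℝ) - (((m:ℤ):ℝ) - (a:ℝ) + (b:ℝ)))^2)
    rw [h]
    refine Finset.sum_congr rfl (fun m hm => ?_)
    simp only [Finset.mem_Icc] at hm
    exact inner1 n m p hm.1 hm.2
  have e2 : (∫ ω, ((((⌈(n:ℝ) * U ω⌉ : ℤ) : ℝ) - 1)^2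
          + ((n:ℝ) - ((⌈(n:ℝ) * U ω⌉ : ℤ) : ℝ))^2) ∂P)
      = ∑ m ∈ Finset.Icc 1 n, (1/(n:ℝ)) * (((m:ℝ)-1)^2 + ((n:ℝ)-(m:ℝ))^2) := by
    have h := integral_eq_sum P n hn p hp U sl sr hUm hslm hsrm hU hjoint
      (fun m a b => (((m:ℤ):ℝ) - 1)^2 + ((n:ℝ) - ((m:ℤ):ℝ))^2)
    rw [h]
    refine Finset.sum_congr rfl (fun m hm => ?_)
    simp only [Finset.mem_Icc] at hm
    exact inner2 n m p hm.1 hm.2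
  have s2 : ∑ m ∈ Finset.Icc 1 n, (((m:ℝ)-1)^2 + ((n:ℝ)-(m:ℝ))^2)
      = (1+(n:ℝ)^2)*(n:ℝ) + (-2-2*(n:ℝ))*((n:ℝ)*((n:ℝ)+1)/2)
        + 2*((n:ℝ)*((n:ℝ)+1)*(2*(n:ℝ)+1)/6) :=
    sum_quad_Icc n (1+(n:ℝ)^2) (-2-2*(n:ℝ)) 2 _ (fun m => by ring)
  have s1 : ∑ m ∈ Finset.Icc 1 n, ((((m:ℝ)-1)^2 + ((n:ℝ)-(m:ℝ))^2)
          + 2*p*(1-p)*(((n:ℝ)-1) - (2*(m:ℝ)-(n:ℝ)-1)^2))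
      = ((1+(n:ℝ)^2) + 2*p*(1-p)*(((n:ℝ)-1) - ((n:ℝ)+1)^2))*(n:ℝ)
        + ((-2-2*(n:ℝ)) + 8*p*(1-p)*((n:ℝ)+1))*((n:ℝ)*((n:ℝ)+1)/2)
        + (2 - 8*p*(1-p))*((n:ℝ)*((n:ℝ)+1)*(2*(n:ℝ)+1)/6) :=
    sum_quad_Icc n ((1+(n:ℝ)^2) + 2*p*(1-p)*(((n:ℝ)-1) - ((n:ℝ)+1)^2))
      ((-2-2*(n:ℝ)) + 8*p*(1-p)*((n:ℝ)+1)) (2 - 8*p*(1-p)) _ (fun m => by ring)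
  refine ⟨?_, ?_, ?_⟩
  · rw [e1, e2, ← Finset.mul_sum, ← Finset.mul_sum]
    refine mul_le_mul_of_nonneg_left ?_ (by positivity)
    rw [s1, s2]
    have hkey : 0 ≤ (p*(1-p)) * ((n:ℝ)*(((n:ℝ)-1)*((n:ℝ)-2))) ∨ n = 1 := by
      rcases Nat.lt_or_ge n 2 with h2 | h2
      · right; omega
      · left
        have hn2 : (2:ℝ) ≤ (n:ℝ) := by exact_mod_cast h2
        apply mul_nonneg hq
        apply mul_nonneg (le_of_lt hn0)
        apply mul_nonneg <;> linarith
    rcases hkey with hkey | hkey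
    · nlinarith [hkey]
    · subst hkey; push_cast; nlinarith [hq]
  · rw [e2, ← Finset.mul_sum, s2]
    field_simp
    ring
  · have hn1 : (1:ℝ) ≤ (n:ℝ) := by exact_mod_cast hn
    nlinarith [hn1]
end

section
/- Let M_k = max_{1≤j≤2^k} w_{k,j} be the maximal interval length at generation k of the recursive uniform fragmentation of [0,1]. Then for every α ≥ 1, E[M_k] ≤ (2/(1+α))^{k/α}. In particular E[M_k] ≤ ρ^k where ρ ≈ 0.7930 is the larger real root of ρ^{-1} = -2e·ln ρ. -/
/-!
Along the branch leading to it, a piece `w_{k,j}` of generation `k` is a product of `k`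
independent factors, each `U` or `1 - U` for a uniform `U`, so `E[w_{k,j}^α] = (1 + α)^{-k}`
and `E[Σ_j w_{k,j}^α] = (2 / (1 + α))^k`. Since `M_k ≤ (Σ_j w_{k,j}^α)^{1/α}` and `x ↦ x^{1/α}`
is concave for `α ≥ 1`, Jensen's inequality gives `E[M_k] ≤ (2 / (1 + α))^{k/α}`.
For a root `ρ` of `ρ⁻¹ = -2e log ρ`, the exponent `α = -1 / log ρ - 1` makes `2 / (1 + α) = ρ^α`.
-/

open MeasureTheory ProbabilityTheory

section MaxBound

variable {Ω : Type*} [MeasurableSpace Ω] {μ : Measure Ω}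

lemma rpow_inv_le_one_add {x α : ℝ} (hx : 0 ≤ x) (hα : 1 ≤ α) : x ^ α⁻¹ ≤ 1 + x := by
  have hα' : 0 ≤ α⁻¹ := by positivity
  rcases le_total x 1 with h | h
  · linarith [Real.rpow_le_one hx h hα']
  · have : x ^ α⁻¹ ≤ x ^ (1 : ℝ) :=
      Real.rpow_le_rpow_of_exponent_le h (inv_le_one_of_one_le₀ hα)
    rw [Real.rpow_one] at this
    linarith

theorem integral_sup'_le_rpow_sum_integral [IsProbabilityMeasure μ] {ι : Type*} {s : Finset ι}
    (hs : s.Nonempty) {f : ι → Ω → ℝ} {α : ℝ} (hα : 1 ≤ α)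
    (hf : ∀ j ∈ s, Integrable (fun ω => |f j ω| ^ α) μ) :
    ∫ ω, s.sup' hs (fun j => f j ω) ∂μ ≤ (∑ j ∈ s, ∫ ω, |f j ω| ^ α ∂μ) ^ α⁻¹ := by
  set S : Ω → ℝ := fun ω => ∑ j ∈ s, |f j ω| ^ α
  have hα0 : 0 < α := by linarith
  have hS0 : ∀ ω, 0 ≤ S ω := fun ω => Finset.sum_nonneg fun j _ => by positivity
  have hS : Integrable S μ := integrable_finsetSum s hf
  have hSα : Integrable (fun ω => S ω ^ α⁻¹) μ := by
    refine ((integrable_const 1).add hS).mono'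
      ((Real.continuous_rpow_const (by positivity)).comp_aestronglyMeasurable
        hS.aestronglyMeasurable) (Filter.Eventually.of_forall fun ω => ?_)
    rw [Real.norm_of_nonneg (by positivity)]
    exact rpow_inv_le_one_add (hS0 ω) hα
  have hmax_le : ∀ ω, s.sup' hs (fun j => f j ω) ≤ S ω ^ α⁻¹ := fun ω =>
    Finset.sup'_le hs _ fun j hj => calc
      f j ω ≤ |f j ω| := le_abs_self _
      _ = (|f j ω| ^ α) ^ α⁻¹ := (Real.rpow_rpow_inv (abs_nonneg _) hα0.ne').symm
      _ ≤ S ω ^ α⁻¹ := Real.rpow_le_rpow (by positivity)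
        (Finset.single_le_sum (f := fun i => |f i ω| ^ α) (fun i _ => by positivity) hj)
        (by positivity)
  have jensen : ∫ ω, S ω ^ α⁻¹ ∂μ ≤ (∫ ω, S ω ∂μ) ^ α⁻¹ :=
    (Real.concaveOn_rpow (by positivity) (inv_le_one_of_one_le₀ hα)).le_map_integral
      (Real.continuous_rpow_const (by positivity)).continuousOn isClosed_Ici
      (Filter.Eventually.of_forall hS0) hS hSα
  calc ∫ ω, s.sup' hs (fun j => f j ω) ∂μ ≤ ∫ ω, S ω ^ α⁻¹ ∂μ := by
        by_cases hM : Integrable (fun ω => s.sup' hs (fun j => f j ω)) μ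
        · exact integral_mono hM hSα hmax_le
        · rw [integral_undef hM]
          exact integral_nonneg fun ω => by positivity
    _ ≤ (∫ ω, S ω ∂μ) ^ α⁻¹ := jensen
    _ = (∑ j ∈ s, ∫ ω, |f j ω| ^ α ∂μ) ^ α⁻¹ := by rw [integral_finsetSum s hf]

end MaxBound

lemma exists_eq_two_mul_or_eq_two_mul_sub_one {k m : ℕ} (hm : m ≤ 2 ^ (k + 1)) :
    ∃ j ≤ 2 ^ k, m = 2 * j ∨ (1 ≤ j ∧ m = 2 * j - 1) := by
  rw [pow_succ] at hm
  exact ⟨(m + 1) / 2, by omega, by omega⟩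

section Uniform

variable {Ω : Type*} [MeasurableSpace Ω] {P : Measure Ω} {X : Ω → ℝ}

lemma map_one_sub_volume_restrict_Icc :
    (volume.restrict (Set.Icc (0 : ℝ) 1)).map (fun x => 1 - x) = volume.restrict (Set.Icc 0 1) := by
  have h := Measure.restrict_map (μ := volume) (f := fun x : ℝ => 1 - x) (by fun_prop)
    (measurableSet_Icc (a := 0) (b := 1))
  rw [(volume.measurePreserving_sub_left 1).map_eq] at h
  simpa using h.symm

lemma map_one_sub_eq_uniform (hX : AEMeasurable X P)
    (hlaw : P.map X = volume.restrict (Set.Icc 0 1)) :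
    P.map (fun ω => 1 - X ω) = volume.restrict (Set.Icc 0 1) := by
  have h := (by fun_prop : Measurable fun x : ℝ => 1 - x).aemeasurable.map_map_of_aemeasurable hX
  rw [hlaw, map_one_sub_volume_restrict_Icc] at h
  exact h.symm

lemma integral_abs_rpow_of_map_eq_uniform (hX : AEMeasurable X P)
    (hlaw : P.map X = volume.restrict (Set.Icc 0 1)) {α : ℝ} (hα : -1 < α) :
    ∫ ω, |X ω| ^ α ∂P = (1 + α)⁻¹ := by
  have habs : ∀ x ∈ Set.uIcc (0 : ℝ) 1, |x| ^ α = x ^ α := fun x hx => by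
    rw [Set.uIcc_of_le zero_le_one] at hx
    rw [abs_of_nonneg hx.1]
  rw [← integral_map (f := fun x : ℝ => |x| ^ α) hX
      (measurable_abs.pow_const α).aestronglyMeasurable, hlaw,
    integral_Icc_eq_integral_Ioc, ← intervalIntegral.integral_of_le zero_le_one,
    intervalIntegral.integral_congr habs, integral_rpow (Or.inl hα), Real.one_rpow,
    Real.zero_rpow (by linarith)]
  ring

end Uniform

namespace Fragmentation

variable {Ω : Type*} (U Y : ℕ → ℕ → Ω → ℝ)

structure IsRecursion : Prop where
  zero_zero : ∀ ω, Y 0 0 ω = 0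
  zero_one : ∀ ω, Y 0 1 ω = 1
  even : ∀ k j, j ≤ 2 ^ k → ∀ ω, Y (k + 1) (2 * j) ω = Y k j ω
  odd : ∀ k j, 1 ≤ j → j ≤ 2 ^ k → ∀ ω,
    Y (k + 1) (2 * j - 1) ω = (1 - U k j ω) * Y k (j - 1) ω + U k j ω * Y k j ω

/-- The paper's interval length `w_{k,j}`. -/
def piece (k j : ℕ) (ω : Ω) : ℝ := Y k j ω - Y k (j - 1) ω

abbrev pastCuts (k : ℕ) : MeasurableSpace Ω :=
  ⨆ p ∈ {p : ℕ × ℕ | p.1 < k}, MeasurableSpace.comap (U p.1 p.2) inferInstance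

variable {U Y}

lemma IsRecursion.piece_odd (hY : IsRecursion U Y) {k j : ℕ} (h1 : 1 ≤ j) (h2 : j ≤ 2 ^ k)
    (ω : Ω) : piece Y (k + 1) (2 * j - 1) ω = U k j ω * piece Y k j ω := by
  have hprev : Y (k + 1) (2 * j - 1 - 1) ω = Y k (j - 1) ω := by
    rw [show 2 * j - 1 - 1 = 2 * (j - 1) by omega]
    exact hY.even k (j - 1) (by omega) ω
  simp only [piece, hprev, hY.odd k j h1 h2 ω]
  ring

lemma IsRecursion.piece_even (hY : IsRecursion U Y) {k j : ℕ} (h1 : 1 ≤ j) (h2 : j ≤ 2 ^ k)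
    (ω : Ω) : piece Y (k + 1) (2 * j) ω = (1 - U k j ω) * piece Y k j ω := by
  simp only [piece, hY.even k j h2 ω, hY.odd k j h1 h2 ω]
  ring

lemma pastCuts_mono {k l : ℕ} (h : k ≤ l) : pastCuts U k ≤ pastCuts U l :=
  biSup_mono fun _ hp => lt_of_lt_of_le hp h

lemma measurable_U_pastCuts {i j k : ℕ} (h : i < k) : Measurable[pastCuts U k] (U i j) :=
  Measurable.of_comap_le <| le_iSup₂ (f := fun (p : ℕ × ℕ) (_ : p ∈ {p : ℕ × ℕ | p.1 < k}) =>
    MeasurableSpace.comap (U p.1 p.2) inferInstance) (i, j) h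

lemma IsRecursion.measurable_Y_pastCuts (hY : IsRecursion U Y) :
    ∀ {k j : ℕ}, j ≤ 2 ^ k → Measurable[pastCuts U k] (Y k j)
  | 0, j, hj => by
    obtain rfl | rfl : j = 0 ∨ j = 1 := by omega
    · simp only [show Y 0 0 = fun _ => 0 from funext hY.zero_zero, measurable_const]
    · simp only [show Y 0 1 = fun _ => 1 from funext hY.zero_one, measurable_const]
  | k + 1, m, hm => by
    have hmono := pastCuts_mono (U := U) k.le_succ
    obtain ⟨j, hj, rfl | ⟨h1, rfl⟩⟩ := exists_eq_two_mul_or_eq_two_mul_sub_one hm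
    · rw [show Y (k + 1) (2 * j) = Y k j from funext (hY.even k j hj)]
      exact (hY.measurable_Y_pastCuts hj).mono hmono le_rfl
    · rw [show Y (k + 1) (2 * j - 1) = _ from funext (hY.odd k j h1 hj)]
      have hU : Measurable[pastCuts U (k + 1)] (U k j) := measurable_U_pastCuts k.lt_succ_self
      have hY₀ := (hY.measurable_Y_pastCuts (j := j - 1) (by omega)).mono hmono le_rfl
      have hY₁ := (hY.measurable_Y_pastCuts hj).mono hmono le_rfl
      exact ((measurable_const.sub hU).mul hY₀).add (hU.mul hY₁)

lemma IsRecursion.measurable_piece (hY : IsRecursion U Y) {k j : ℕ} (hj : j ≤ 2 ^ k) :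
    Measurable[pastCuts U k] (piece Y k j) :=
  (hY.measurable_Y_pastCuts hj).sub (hY.measurable_Y_pastCuts (by omega))

variable [MeasurableSpace Ω] {P : Measure Ω}

lemma pastCuts_le (hU : ∀ k j, Measurable (U k j)) (k : ℕ) :
    pastCuts U k ≤ ‹MeasurableSpace Ω› :=
  iSup₂_le fun p _ => (hU p.1 p.2).comap_le

lemma indep_pastCuts (hU : ∀ k j, Measurable (U k j))
    (hindep : iIndepFun (fun p : ℕ × ℕ => U p.1 p.2) P) (k j : ℕ) :
    Indep (pastCuts U k) (MeasurableSpace.comap (U k j) inferInstance) P := by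
  have h := indep_iSup_of_disjoint (fun p => (hU p.1 p.2).comap_le)
    ((iIndepFun_iff_iIndep _ _ _).mp hindep)
    (S := {p : ℕ × ℕ | p.1 < k}) (T := {(k, j)}) (by simp)
  rwa [iSup_singleton] at h

lemma integral_comp_U_mul (hU : ∀ k j, Measurable (U k j))
    (hindep : iIndepFun (fun p : ℕ × ℕ => U p.1 p.2) P) {k j : ℕ} {f : Ω → ℝ}
    (hf : Measurable[pastCuts U k] f) {g : ℝ → ℝ} (hg : Measurable g) :
    ∫ ω, g (U k j ω) * f ω ∂P = (∫ ω, g (U k j ω) ∂P) * ∫ ω, f ω ∂P := by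
  have hgU : Measurable (fun ω => g (U k j ω)) := hg.comp (hU k j)
  have hind : IndepFun (fun ω => g (U k j ω)) f P := by
    rw [IndepFun_iff_Indep]
    exact (indep_of_indep_of_le_left (indep_of_indep_of_le_right (indep_pastCuts hU hindep k j)
      (hg.comp (comap_measurable (U k j))).comap_le) hf.comap_le).symm
  exact hind.integral_mul_eq_mul_integral hgU.aestronglyMeasurable
    (hf.mono (pastCuts_le hU k) le_rfl).aestronglyMeasurable

lemma IsRecursion.integral_abs_piece_rpow [IsProbabilityMeasure P] (hY : IsRecursion U Y)
    (hU : ∀ k j, Measurable (U k j))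
    (hlaw : ∀ k j, P.map (U k j) = volume.restrict (Set.Icc 0 1))
    (hindep : iIndepFun (fun p : ℕ × ℕ => U p.1 p.2) P) {α : ℝ} (hα : -1 < α) :
    ∀ {k j : ℕ}, 1 ≤ j → j ≤ 2 ^ k → ∫ ω, |piece Y k j ω| ^ α ∂P = (1 + α)⁻¹ ^ k
  | 0, j, h1, h2 => by
    obtain rfl : j = 1 := by omega
    simp [piece, hY.zero_zero, hY.zero_one]
  | k + 1, m, h1, h2 => by
    obtain ⟨j, hj, rfl | ⟨hj1, rfl⟩⟩ := exists_eq_two_mul_or_eq_two_mul_sub_one h2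
    all_goals
      have hj1 : 1 ≤ j := by omega
      have hw : Measurable[pastCuts U k] (fun ω => |piece Y k j ω| ^ α) :=
        (measurable_abs.pow_const α).comp (hY.measurable_piece hj)
      have ih := hY.integral_abs_piece_rpow hU hlaw hindep hα hj1 hj
      have hUj : AEMeasurable (U k j) P := (hU k j).aemeasurable
    · simp only [hY.piece_even hj1 hj, abs_mul, abs_nonneg, Real.mul_rpow]
      rw [integral_comp_U_mul hU hindep (g := fun x => |1 - x| ^ α) hw (by fun_prop),
        integral_abs_rpow_of_map_eq_uniform (X := fun ω => 1 - U k j ω) (by fun_prop)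
          (map_one_sub_eq_uniform hUj (hlaw k j)) hα, ih, pow_succ']
    · simp only [hY.piece_odd hj1 hj, abs_mul, abs_nonneg, Real.mul_rpow]
      rw [integral_comp_U_mul hU hindep (g := fun x => |x| ^ α) hw (by fun_prop),
        integral_abs_rpow_of_map_eq_uniform hUj (hlaw k j) hα, ih, pow_succ']

lemma IsRecursion.integral_sup'_piece_le [IsProbabilityMeasure P] (hY : IsRecursion U Y)
    (hU : ∀ k j, Measurable (U k j))
    (hlaw : ∀ k j, P.map (U k j) = volume.restrict (Set.Icc 0 1))
    (hindep : iIndepFun (fun p : ℕ × ℕ => U p.1 p.2) P) (k : ℕ) {α : ℝ} (hα : 1 ≤ α) :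
    ∫ ω, (Finset.Icc 1 (2 ^ k)).sup' (Finset.nonempty_Icc.mpr Nat.one_le_two_pow)
        (fun j => piece Y k j ω) ∂P ≤ (2 / (1 + α)) ^ ((k : ℝ) / α) := by
  have hmom : ∀ j ∈ Finset.Icc 1 (2 ^ k), ∫ ω, |piece Y k j ω| ^ α ∂P = (1 + α)⁻¹ ^ k :=
    fun j hj => hY.integral_abs_piece_rpow hU hlaw hindep (by linarith)
      (Finset.mem_Icc.mp hj).1 (Finset.mem_Icc.mp hj).2
  -- integrability is free: a non-integrable function has integral `0`
  have hint : ∀ j ∈ Finset.Icc 1 (2 ^ k), Integrable (fun ω => |piece Y k j ω| ^ α) P :=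
    fun j hj => Integrable.of_integral_ne_zero (by rw [hmom j hj]; positivity)
  calc _ ≤ (∑ j ∈ Finset.Icc 1 (2 ^ k), ∫ ω, |piece Y k j ω| ^ α ∂P) ^ α⁻¹ :=
        integral_sup'_le_rpow_sum_integral _ hα hint
    _ = ((2 / (1 + α)) ^ k) ^ α⁻¹ := by
        rw [Finset.sum_congr rfl hmom, Finset.sum_const, Nat.card_Icc, nsmul_eq_mul,
          add_tsub_cancel_right, Nat.cast_pow, Nat.cast_ofNat, ← mul_pow, div_eq_mul_inv]
    _ = (2 / (1 + α)) ^ ((k : ℝ) / α) := by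
        rw [← Real.rpow_natCast, ← Real.rpow_mul (by positivity), ← div_eq_mul_inv]

open Real in
/-- Forces the largest root above `exp (-1/2)`, which is what makes the exponent of
`exists_exponent_of_root` at least `1`. -/
lemma exists_root_mem_Ico :
    ∃ c ∈ Set.Ico (exp (-(1 / 2))) 1, c⁻¹ = -2 * exp 1 * log c := by
  set a := exp (-(1 / 2))
  have ha0 : 0 < a := exp_pos _
  have ha1 : a ≤ 1 := exp_le_one_iff.mpr (by norm_num)
  set h : ℝ → ℝ := fun x => x⁻¹ + 2 * exp 1 * log x
  have hcont : ContinuousOn h (Set.Icc a 1) := by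
    have hne : ∀ x ∈ Set.Icc a 1, x ≠ 0 := fun x hx => (ha0.trans_le hx.1).ne'
    exact (continuousOn_inv₀.mono hne).add (continuousOn_const.mul (continuousOn_log.mono hne))
  have ha : h a ≤ 0 := by
    have : exp (1 / 2) ≤ exp 1 := exp_le_exp.mpr (by norm_num)
    simp only [h, a, log_exp, ← exp_neg, neg_neg]
    linarith
  obtain ⟨c, hc, hc0⟩ := intermediate_value_Ico ha1 hcont ⟨ha, by simp [h]⟩
  exact ⟨c, hc, by linarith [show h c = 0 from hc0]⟩

open Real in
lemma exists_exponent_of_root {ρ : ℝ} (hρ : exp (-(1 / 2)) ≤ ρ) (hρ1 : ρ < 1)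
    (hroot : ρ⁻¹ = -2 * exp 1 * log ρ) :
    ∃ α : ℝ, 1 ≤ α ∧ ∀ k : ℕ, (2 / (1 + α)) ^ ((k : ℝ) / α) = ρ ^ k := by
  have hρ0 : 0 < ρ := (exp_pos _).trans_le hρ
  have hlog : -(1 / 2) ≤ log ρ := by simpa using log_le_log (exp_pos _) hρ
  have hlog0 : log ρ < 0 := log_neg hρ0 hρ1
  obtain ⟨α, h1α⟩ : ∃ α : ℝ, (1 + α) * log ρ = -1 :=
    ⟨-(log ρ)⁻¹ - 1, by rw [add_sub_cancel, neg_mul, inv_mul_cancel₀ hlog0.ne]⟩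
  have hα1 : 1 ≤ α := by nlinarith
  -- `2 / (1 + α) = -2 log ρ = (e ρ)⁻¹ = exp (-1 - log ρ) = ρ ^ α`
  have hbase : 2 / (1 + α) = ρ ^ α := by
    rw [rpow_def_of_pos hρ0, show log ρ * α = -1 + -log ρ by linarith, exp_add, exp_neg, exp_neg,
      exp_log hρ0, hroot, div_eq_iff (by nlinarith)]
    field_simp
    linear_combination h1α
  refine ⟨α, hα1, fun k => ?_⟩
  rw [hbase, ← rpow_natCast, ← rpow_mul hρ0.le, mul_div_cancel₀ _ (by linarith)]

end Fragmentation

/-- Let `M_k` be the maximal interval length at generation `k` of the recursive uniform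
fragmentation of `[0,1]`. Then `E[M_k] ≤ (2/(1+α))^{k/α}` for every `α ≥ 1`; in
particular `E[M_k] ≤ ρ^k` where `ρ` is the larger root in `(0,1)` of `ρ⁻¹ = -2e ln ρ`. -/
theorem fragmentation_max_length_bound {Ω : Type*} [MeasurableSpace Ω] (P : Measure Ω)
    [IsProbabilityMeasure P] (U : ℕ → ℕ → Ω → ℝ) (Y : ℕ → ℕ → Ω → ℝ)
    (hUm : ∀ k j, Measurable (U k j))
    (hUlaw : ∀ k j, Measure.map (U k j) P = volume.restrict (Set.Icc (0:ℝ) 1))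
    (hUindep : iIndepFun (fun kj : ℕ × ℕ => U kj.1 kj.2) P)
    (hY00 : ∀ ω, Y 0 0 ω = 0) (hY01 : ∀ ω, Y 0 1 ω = 1)
    (hYeven : ∀ k j, j ≤ 2 ^ k → ∀ ω, Y (k+1) (2*j) ω = Y k j ω)
    (hYodd : ∀ k j, 1 ≤ j → j ≤ 2 ^ k → ∀ ω,
      Y (k+1) (2*j - 1) ω = (1 - U k j ω) * Y k (j-1) ω + U k j ω * Y k j ω) :
    ∀ k : ℕ,
      (∀ α : ℝ, 1 ≤ α →
        ∫ ω, (Finset.Icc 1 (2 ^ k)).sup' (Finset.nonempty_Icc.mpr Nat.one_le_two_pow)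
            (fun j => Y k j ω - Y k (j-1) ω) ∂P
          ≤ (2 / (1 + α)) ^ ((k : ℝ) / α))
      ∧ (∀ ρ : ℝ, 0 < ρ → ρ < 1 → ρ⁻¹ = -2 * Real.exp 1 * Real.log ρ →
          (∀ ρ' : ℝ, 0 < ρ' → ρ' < 1 → ρ'⁻¹ = -2 * Real.exp 1 * Real.log ρ' → ρ' ≤ ρ) →
          ∫ ω, (Finset.Icc 1 (2 ^ k)).sup' (Finset.nonempty_Icc.mpr Nat.one_le_two_pow)
              (fun j => Y k j ω - Y k (j-1) ω) ∂P ≤ ρ ^ k) := by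
  have hY : Fragmentation.IsRecursion U Y := ⟨hY00, hY01, hYeven, hYodd⟩
  intro k
  have hbound (α : ℝ) (hα : 1 ≤ α) := hY.integral_sup'_piece_le hUm hUlaw hUindep k hα
  refine ⟨hbound, fun ρ _ hρ1 hroot hlargest => ?_⟩
  obtain ⟨c, hc, hcroot⟩ := Fragmentation.exists_root_mem_Ico
  have hρ : Real.exp (-(1 / 2)) ≤ ρ :=
    hc.1.trans (hlargest c ((Real.exp_pos _).trans_le hc.1) hc.2 hcroot)
  obtain ⟨α, hα, hαk⟩ := Fragmentation.exists_exponent_of_root hρ hρ1 hroot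
  rw [← hαk k]
  exact hbound α hα
end

section
/- Let (D, d_1) be the space of probability measures on ℝ with finite first moment, with the Wasserstein-1 metric. Given a random vector C = (A^{(1)},…,A^{(I)}, T) with Σ_{i=1}^I E|A^{(i)}| < 1 and E|T| < ∞, the map Ψ sending a distribution F to the law of Σ_{i=1}^I A^{(i)} X^{(i)} + T (where X^{(i)} are i.i.d. with law F, independent of C) is a strict contraction on D with Lipschitz constant Σ_i E|A^{(i)}| < 1, and hence has a unique fixed point in D. -/
open MeasureTheory ProbabilityTheory

/-- The Wasserstein-1 distance between two probability measures on ℝ: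
the infimum over couplings of `E|X - Y|`. -/
noncomputable def wasserstein1 (μ ν : Measure ℝ) : ℝ :=
  sInf {r : ℝ | ∃ π : Measure (ℝ × ℝ), IsProbabilityMeasure π ∧
    π.map Prod.fst = μ ∧ π.map Prod.snd = ν ∧ r = ∫ q, |q.1 - q.2| ∂π}

/-- The map `Ψ` sending a distribution `F` on ℝ to the law of
`Σ_{i=1}^I A^{(i)} X^{(i)} + T`, where `X^{(1)},…,X^{(I)}` are i.i.d. with law `F`,
independent of the random vector `(A^{(1)},…,A^{(I)},T)`. -/
noncomputable def PsiMap {Ω : Type*} [MeasurableSpace Ω] (P : Measure Ω) {I : ℕ}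
    (A : Fin I → Ω → ℝ) (T : Ω → ℝ) (F : Measure ℝ) : Measure ℝ :=
  Measure.map (fun q : Ω × (Fin I → ℝ) => (∑ i, A i q.1 * q.2 i) + T q.1)
    (P.prod (Measure.pi fun _ : Fin I => F))


section WassersteinProofs
open Set Filter
open scoped ENNReal

noncomputable section
namespace WassersteinAux

/-- Uniform measure on `(0,1)`. -/
def mm : Measure ℝ := volume.restrict (Set.Ioo 0 1)

instance : IsProbabilityMeasure mm :=
  ⟨by simp [mm, Real.volume_Ioo]⟩

/-- Projection of `ℝ` onto `(0,1)` which is the identity there. -/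
def proj (u : ℝ) : ℝ := if 0 < u ∧ u < 1 then u else 1/2

lemma proj_mem (u : ℝ) : proj u ∈ Ioo (0:ℝ) 1 := by
  unfold proj; split
  · exact ⟨‹0 < u ∧ u < 1›.1, ‹0 < u ∧ u < 1›.2⟩
  · norm_num

lemma proj_measurable : Measurable proj := by
  unfold proj
  refine Measurable.ite ?_ measurable_id measurable_const
  exact (measurableSet_Ioi.preimage measurable_id).inter (measurableSet_Iio.preimage measurable_id)

lemma proj_eq_self {u : ℝ} (h : u ∈ Ioo (0:ℝ) 1) : proj u = u := if_pos ⟨h.1, h.2⟩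

/-- Quantile function of a measure on ℝ (composed with `proj` to make it total). -/
def quant (μ : Measure ℝ) (u : ℝ) : ℝ := sInf {x | proj u ≤ cdf μ x}

variable {μ ν : Measure ℝ}

lemma quant_le_iff [IsProbabilityMeasure μ] (u t : ℝ) :
    quant μ u ≤ t ↔ proj u ≤ cdf μ t := by
  set v := proj u with hv
  have hv0 : 0 < v := (proj_mem u).1
  have hv1 : v < 1 := (proj_mem u).2
  have hne : Set.Nonempty {x | v ≤ cdf μ x} := by
    have h1 : ∀ᶠ x in atTop, v < cdf μ x :=
      (tendsto_cdf_atTop μ).eventually (eventually_gt_nhds hv1)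
    obtain ⟨x, hx⟩ := h1.exists
    exact ⟨x, hx.le⟩
  have hbdd : BddBelow {x | v ≤ cdf μ x} := by
    have h0 : ∀ᶠ x in atBot, cdf μ x < v :=
      (tendsto_cdf_atBot μ).eventually (eventually_lt_nhds hv0)
    obtain ⟨x0, hx0⟩ := eventually_atBot.mp h0
    exact ⟨x0, fun y hy => le_of_not_gt fun hc => absurd hy (not_le.mpr (hx0 y hc.le))⟩
  constructor
  · intro h
    have h2 : v ≤ ⨅ r : Ioi t, cdf μ r := by
      refine le_ciInf fun r => ?_
      obtain ⟨s, hsS, hsr⟩ := (csInf_lt_iff hbdd hne).mp (lt_of_le_of_lt h r.2)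
      exact le_trans hsS (monotone_cdf μ hsr.le)
    rwa [StieltjesFunction.iInf_Ioi_eq] at h2
  · intro h
    exact csInf_le hbdd h

lemma quant_preimage_Iic [IsProbabilityMeasure μ] (t : ℝ) :
    quant μ ⁻¹' Iic t = proj ⁻¹' Iic (cdf μ t) := by
  ext u; simpa using quant_le_iff (μ := μ) u t

lemma measurable_quant [IsProbabilityMeasure μ] : Measurable (quant μ) := by
  refine measurable_of_Iic fun t => ?_
  rw [quant_preimage_Iic]
  exact proj_measurable measurableSet_Iic

lemma mm_quant_le [IsProbabilityMeasure μ] (t : ℝ) :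
    mm (quant μ ⁻¹' Iic t) = μ (Iic t) := by
  rw [quant_preimage_Iic]
  have hset : proj ⁻¹' Iic (cdf μ t) ∩ Ioo (0:ℝ) 1 = Iic (cdf μ t) ∩ Ioo (0:ℝ) 1 := by
    ext u
    simp only [mem_inter_iff, mem_preimage, mem_Iic, and_congr_left_iff]
    intro hu
    rw [proj_eq_self hu]
  rw [mm, Measure.restrict_apply (proj_measurable measurableSet_Iic), hset]
  have h0 : 0 ≤ cdf μ t := cdf_nonneg μ t
  have h1 : cdf μ t ≤ 1 := cdf_le_one μ t
  rw [← ofReal_cdf μ t]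
  rcases lt_or_ge (cdf μ t) 1 with hc | hc
  · have : Iic (cdf μ t) ∩ Ioo (0:ℝ) 1 = Ioc 0 (cdf μ t) := by
      ext u
      simp only [mem_inter_iff, mem_Iic, mem_Ioo, mem_Ioc]
      exact ⟨fun h => ⟨h.2.1, h.1⟩, fun h => ⟨h.2, h.1, lt_of_le_of_lt h.2 hc⟩⟩
    rw [this, Real.volume_Ioc, sub_zero]
  · have hc1 : cdf μ t = 1 := le_antisymm h1 hc
    have : Iic (cdf μ t) ∩ Ioo (0:ℝ) 1 = Ioo (0:ℝ) 1 := by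
      rw [hc1]; ext u
      simp only [mem_inter_iff, mem_Iic, mem_Ioo]
      exact ⟨fun h => h.2, fun h => ⟨h.2.le, h⟩⟩
    rw [this, hc1, Real.volume_Ioo]; norm_num

lemma map_quant [IsProbabilityMeasure μ] : Measure.map (quant μ) mm = μ := by
  haveI : IsProbabilityMeasure (Measure.map (quant μ) mm) :=
    Measure.isProbabilityMeasure_map measurable_quant.aemeasurable
  refine Measure.ext_of_Iic _ _ fun t => ?_
  rw [Measure.map_apply measurable_quant measurableSet_Iic, mm_quant_le]

lemma integrable_quant [IsProbabilityMeasure μ] (h : Integrable (id : ℝ → ℝ) μ) :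
    Integrable (quant μ) mm := by
  have h2 : Integrable (id : ℝ → ℝ) (Measure.map (quant μ) mm) := by rwa [map_quant]
  have h3 := (integrable_map_measure aestronglyMeasurable_id
    measurable_quant.aemeasurable).mp h2
  simpa [Function.comp] using h3
  

/-! ### Wasserstein basic lemmas -/

def cpl (μ ν : Measure ℝ) : Set ℝ :=
  {r : ℝ | ∃ π : Measure (ℝ × ℝ), IsProbabilityMeasure π ∧
    π.map Prod.fst = μ ∧ π.map Prod.snd = ν ∧ r = ∫ q, |q.1 - q.2| ∂π}

lemma wasserstein1_eq (μ ν : Measure ℝ) : wasserstein1 μ ν = sInf (cpl μ ν) := rfl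

lemma cpl_nonneg {μ ν : Measure ℝ} : ∀ r ∈ cpl μ ν, (0:ℝ) ≤ r := by
  rintro r ⟨π, hπ, h1, h2, rfl⟩
  exact integral_nonneg fun q => abs_nonneg _

lemma cpl_bddBelow {μ ν : Measure ℝ} : BddBelow (cpl μ ν) :=
  ⟨0, fun r hr => cpl_nonneg r hr⟩

lemma cpl_nonempty {μ ν : Measure ℝ} [IsProbabilityMeasure μ] [IsProbabilityMeasure ν] :
    (cpl μ ν).Nonempty := by
  refine ⟨∫ q, |q.1 - q.2| ∂(μ.prod ν), μ.prod ν, inferInstance, ?_, ?_, rfl⟩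
  · simp [Measure.map_fst_prod, measure_univ]
  · simp [Measure.map_snd_prod, measure_univ]

lemma wasserstein1_nonneg (μ ν : Measure ℝ) [IsProbabilityMeasure μ] [IsProbabilityMeasure ν] :
    0 ≤ wasserstein1 μ ν :=
  le_csInf cpl_nonempty cpl_nonneg

/-- Upper bound on the Wasserstein distance through a pair of representatives defined
on a common probability space. -/
lemma wasserstein1_le_of_maps {α : Type*} [MeasurableSpace α] (m' : Measure α)
    [IsProbabilityMeasure m'] {μ ν : Measure ℝ} {φ ψ : α → ℝ}
    (hφ : Measurable φ) (hψ : Measurable ψ)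
    (hmapφ : m'.map φ = μ) (hmapψ : m'.map ψ = ν) :
    wasserstein1 μ ν ≤ ∫ a, |φ a - ψ a| ∂m' := by
  have hpair : Measurable fun a => (φ a, ψ a) := hφ.prodMk hψ
  refine csInf_le cpl_bddBelow ?_
  refine ⟨m'.map fun a => (φ a, ψ a), Measure.isProbabilityMeasure_map hpair.aemeasurable, ?_, ?_, ?_⟩
  · rw [Measure.map_map measurable_fst hpair]; exact hmapφ
  · rw [Measure.map_map measurable_snd hpair]; exact hmapψ
  · rw [integral_map hpair.aemeasurable (f := fun q : ℝ × ℝ => |q.1 - q.2|)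
      ((measurable_fst.sub measurable_snd).abs.aestronglyMeasurable)]

/-- The symmetric difference interval. -/
def dset (a b : ℝ) : Set ℝ := Ico a b ∪ Ico b a

lemma dset_meas (a b : ℝ) : MeasurableSet (dset a b) :=
  measurableSet_Ico.union measurableSet_Ico

/-- The "cake-layer" computation. -/
lemma cake (a b : ℝ) :
    ∫⁻ t, (dset a b).indicator (1 : ℝ → ℝ≥0∞) t ∂volume = ENNReal.ofReal |a - b| := by
  rw [dset]
  have hd : Disjoint (Ico a b) (Ico b a) := by
    rw [Set.disjoint_left]
    rintro t ⟨h1, h2⟩ ⟨h3, h4⟩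
    exact absurd h3 (not_le.mpr h2)
  rw [lintegral_indicator_one (measurableSet_Ico.union measurableSet_Ico),
    measure_union hd measurableSet_Ico, Real.volume_Ico, Real.volume_Ico]
  rcases le_total a b with h | h
  · rw [abs_of_nonpos (by linarith), ENNReal.ofReal_of_nonpos (by linarith : a - b ≤ 0)]
    simp [neg_sub]
  · rw [abs_of_nonneg (by linarith), ENNReal.ofReal_of_nonpos (by linarith : b - a ≤ 0)]
    simp


def sliceSet (g h : ℝ → ℝ) : Set (ℝ × ℝ) := {p | p.2 ∈ dset (g p.1) (h p.1)}

def costSet : Set ((ℝ × ℝ) × ℝ) := {z | z.2 ∈ dset z.1.1 z.1.2}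

lemma sliceSet_meas {g h : ℝ → ℝ} (hg : Measurable g) (hh : Measurable h) :
    MeasurableSet (sliceSet g h) := by
  have e : sliceSet g h = ({p : ℝ × ℝ | g p.1 ≤ p.2} ∩ {p : ℝ × ℝ | p.2 < h p.1}) ∪
      ({p : ℝ × ℝ | h p.1 ≤ p.2} ∩ {p : ℝ × ℝ | p.2 < g p.1}) := by
    ext p; simp [sliceSet, dset, Set.mem_Ico]
  rw [e]
  exact ((measurableSet_le (hg.comp measurable_fst) measurable_snd).inter
      (measurableSet_lt measurable_snd (hh.comp measurable_fst))).union
    ((measurableSet_le (hh.comp measurable_fst) measurable_snd).inter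
      (measurableSet_lt measurable_snd (hg.comp measurable_fst)))

lemma costSet_meas : MeasurableSet costSet := by
  have e : costSet = ({z : (ℝ × ℝ) × ℝ | z.1.1 ≤ z.2} ∩ {z : (ℝ × ℝ) × ℝ | z.2 < z.1.2}) ∪
      ({z : (ℝ × ℝ) × ℝ | z.1.2 ≤ z.2} ∩ {z : (ℝ × ℝ) × ℝ | z.2 < z.1.1}) := by
    ext z; simp [costSet, dset, Set.mem_Ico]
  rw [e]
  exact ((measurableSet_le measurable_fst.fst measurable_snd).inter
      (measurableSet_lt measurable_snd measurable_fst.snd)).union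
    ((measurableSet_le measurable_fst.snd measurable_snd).inter
      (measurableSet_lt measurable_snd measurable_fst.fst))

lemma diff_disjoint {α : Type*} (A B : Set α) : Disjoint (A \ B) (B \ A) := by
  rw [Set.disjoint_left]
  rintro x ⟨hx1, hx2⟩ ⟨hx3, hx4⟩
  exact hx2 hx3

/-- Key lower bound: the L¹ distance of quantile functions is at most the cost of
any coupling. -/
lemma quant_dist_le_coupling {μ ν : Measure ℝ} [IsProbabilityMeasure μ] [IsProbabilityMeasure ν]
    (hμ : Integrable (id : ℝ → ℝ) μ) (hν : Integrable (id : ℝ → ℝ) ν)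
    (π : Measure (ℝ × ℝ)) [IsProbabilityMeasure π]
    (h1 : π.map Prod.fst = μ) (h2 : π.map Prod.snd = ν) :
    ∫ u, |quant μ u - quant ν u| ∂mm ≤ ∫ q, |q.1 - q.2| ∂π := by
  have hfst : Integrable (fun q : ℝ × ℝ => q.1) π := by
    have h := hμ; rw [← h1] at h
    simpa [Function.comp] using
      (integrable_map_measure aestronglyMeasurable_id measurable_fst.aemeasurable).mp h
  have hsnd : Integrable (fun q : ℝ × ℝ => q.2) π := by
    have h := hν; rw [← h2] at h
    simpa [Function.comp] using
      (integrable_map_measure aestronglyMeasurable_id measurable_snd.aemeasurable).mp h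
  have hcost : Integrable (fun q : ℝ × ℝ => |q.1 - q.2|) π := (hfst.sub hsnd).abs
  have hQμ : ∀ t : ℝ, MeasurableSet (quant μ ⁻¹' Iic t) :=
    fun t => measurable_quant measurableSet_Iic
  have hQν : ∀ t : ℝ, MeasurableSet (quant ν ⁻¹' Iic t) :=
    fun t => measurable_quant measurableSet_Iic
  have hSS : MeasurableSet (sliceSet (quant μ) (quant ν)) :=
    sliceSet_meas measurable_quant measurable_quant
  have hπ1 : ∀ t : ℝ, π {q : ℝ × ℝ | q.1 ≤ t} = μ (Iic t) := fun t => by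
    rw [← h1, Measure.map_apply measurable_fst measurableSet_Iic]; rfl
  have hπ2 : ∀ t : ℝ, π {q : ℝ × ℝ | q.2 ≤ t} = ν (Iic t) := fun t => by
    rw [← h2, Measure.map_apply measurable_snd measurableSet_Iic]; rfl
  -- pointwise-in-t comparison of symmetric difference masses
  have per_t : ∀ t : ℝ,
      mm ((quant μ ⁻¹' Iic t) \ (quant ν ⁻¹' Iic t)) +
        mm ((quant ν ⁻¹' Iic t) \ (quant μ ⁻¹' Iic t))
      ≤ π ({q : ℝ × ℝ | q.1 ≤ t} \ {q : ℝ × ℝ | q.2 ≤ t}) +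
        π ({q : ℝ × ℝ | q.2 ≤ t} \ {q : ℝ × ℝ | q.1 ≤ t}) := by
    intro t
    have hP1 : μ (Iic t) ≤ π ({q : ℝ × ℝ | q.1 ≤ t} \ {q : ℝ × ℝ | q.2 ≤ t}) + ν (Iic t) := by
      rw [← hπ1 t, ← hπ2 t]
      refine le_trans (measure_mono ?_) (measure_union_le _ _)
      intro q hq
      by_cases h : q.2 ≤ t
      · exact Or.inr h
      · exact Or.inl ⟨hq, h⟩
    have hP2 : ν (Iic t) ≤ π ({q : ℝ × ℝ | q.2 ≤ t} \ {q : ℝ × ℝ | q.1 ≤ t}) + μ (Iic t) := by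
      rw [← hπ1 t, ← hπ2 t]
      refine le_trans (measure_mono ?_) (measure_union_le _ _)
      intro q hq
      by_cases h : q.1 ≤ t
      · exact Or.inr h
      · exact Or.inl ⟨hq, h⟩
    rcases le_total (cdf μ t) (cdf ν t) with hc | hc
    · have hsub : quant μ ⁻¹' Iic t ⊆ quant ν ⁻¹' Iic t := by
        rw [quant_preimage_Iic, quant_preimage_Iic]
        exact preimage_mono (Iic_subset_Iic.mpr hc)
      have e1 : (quant μ ⁻¹' Iic t) \ (quant ν ⁻¹' Iic t) = ∅ := diff_eq_empty.mpr hsub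
      have e2 : mm ((quant ν ⁻¹' Iic t) \ (quant μ ⁻¹' Iic t)) = ν (Iic t) - μ (Iic t) := by
        rw [measure_diff hsub (hQμ t).nullMeasurableSet (measure_ne_top mm _),
          mm_quant_le, mm_quant_le]
      rw [e1, e2]
      simp only [measure_empty, zero_add]
      exact le_trans (tsub_le_iff_right.mpr hP2) le_add_self
    · have hsub : quant ν ⁻¹' Iic t ⊆ quant μ ⁻¹' Iic t := by
        rw [quant_preimage_Iic, quant_preimage_Iic]
        exact preimage_mono (Iic_subset_Iic.mpr hc)
      have e1 : (quant ν ⁻¹' Iic t) \ (quant μ ⁻¹' Iic t) = ∅ := diff_eq_empty.mpr hsub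
      have e2 : mm ((quant μ ⁻¹' Iic t) \ (quant ν ⁻¹' Iic t)) = μ (Iic t) - ν (Iic t) := by
        rw [measure_diff hsub (hQν t).nullMeasurableSet (measure_ne_top mm _),
          mm_quant_le, mm_quant_le]
      rw [e1, e2]
      simp only [measure_empty, add_zero]
      exact le_trans (tsub_le_iff_right.mpr hP1) le_self_add
  -- main chain in ℝ≥0∞
  have key : (∫⁻ u, ENNReal.ofReal |quant μ u - quant ν u| ∂mm)
      ≤ ∫⁻ q : ℝ × ℝ, ENNReal.ofReal |q.1 - q.2| ∂π := by
    have lhs1 : ∫⁻ u, ENNReal.ofReal |quant μ u - quant ν u| ∂mm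
        = ∫⁻ u, ∫⁻ t, (sliceSet (quant μ) (quant ν)).indicator 1 (u, t) ∂volume ∂mm := by
      refine lintegral_congr fun u => ?_
      have e : (fun t => (sliceSet (quant μ) (quant ν)).indicator
            (1 : ℝ × ℝ → ℝ≥0∞) (u, t))
          = (dset (quant μ u) (quant ν u)).indicator (1 : ℝ → ℝ≥0∞) := rfl
      rw [e, cake]
    have swap1 : ∫⁻ u, ∫⁻ t, (sliceSet (quant μ) (quant ν)).indicator 1 (u, t) ∂volume ∂mm
        = ∫⁻ t, ∫⁻ u, (sliceSet (quant μ) (quant ν)).indicator 1 (u, t) ∂mm ∂volume :=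
      lintegral_lintegral_swap ((measurable_one.indicator hSS).aemeasurable)
    have mid : ∀ t : ℝ, ∫⁻ u, (sliceSet (quant μ) (quant ν)).indicator 1 (u, t) ∂mm
        = mm ((quant μ ⁻¹' Iic t) \ (quant ν ⁻¹' Iic t)) +
          mm ((quant ν ⁻¹' Iic t) \ (quant μ ⁻¹' Iic t)) := by
      intro t
      have e0 : (fun u => (sliceSet (quant μ) (quant ν)).indicator (1 : ℝ × ℝ → ℝ≥0∞) (u, t))
          = ({u : ℝ | (u, t) ∈ sliceSet (quant μ) (quant ν)}).indicator (1 : ℝ → ℝ≥0∞) := rfl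
      have eset : {u : ℝ | (u, t) ∈ sliceSet (quant μ) (quant ν)}
          = (((quant μ ⁻¹' Iic t) \ (quant ν ⁻¹' Iic t)) ∪
             ((quant ν ⁻¹' Iic t) \ (quant μ ⁻¹' Iic t))) := by
        ext u
        simp only [sliceSet, dset, Set.mem_setOf_eq, Set.mem_union, Set.mem_Ico,
          Set.mem_diff, Set.mem_preimage, Set.mem_Iic, not_le]
      rw [e0, eset, lintegral_indicator_one
          (((hQμ t).diff (hQν t)).union ((hQν t).diff (hQμ t))),
        measure_union (diff_disjoint _ _) ((hQν t).diff (hQμ t))]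
    have midπ : ∀ t : ℝ,
        ∫⁻ q : ℝ × ℝ, costSet.indicator 1 (q, t) ∂π
        = π ({q : ℝ × ℝ | q.1 ≤ t} \ {q : ℝ × ℝ | q.2 ≤ t}) +
          π ({q : ℝ × ℝ | q.2 ≤ t} \ {q : ℝ × ℝ | q.1 ≤ t}) := by
      intro t
      have hA : MeasurableSet {q : ℝ × ℝ | q.1 ≤ t} :=
        measurableSet_le measurable_fst measurable_const
      have hB : MeasurableSet {q : ℝ × ℝ | q.2 ≤ t} :=
        measurableSet_le measurable_snd measurable_const
      have e0 : (fun q : ℝ × ℝ => costSet.indicator (1 : (ℝ × ℝ) × ℝ → ℝ≥0∞) (q, t))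
          = ({q : ℝ × ℝ | (q, t) ∈ costSet}).indicator (1 : ℝ × ℝ → ℝ≥0∞) := rfl
      have eset : {q : ℝ × ℝ | (q, t) ∈ costSet}
          = (({q : ℝ × ℝ | q.1 ≤ t} \ {q : ℝ × ℝ | q.2 ≤ t}) ∪
             ({q : ℝ × ℝ | q.2 ≤ t} \ {q : ℝ × ℝ | q.1 ≤ t})) := by
        ext q
        simp only [costSet, dset, Set.mem_setOf_eq, Set.mem_union, Set.mem_Ico,
          Set.mem_diff, not_le]
      rw [e0, eset, lintegral_indicator_one ((hA.diff hB).union (hB.diff hA)),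
        measure_union (diff_disjoint _ _) (hB.diff hA)]
    have swap2 : ∫⁻ t, ∫⁻ q : ℝ × ℝ, costSet.indicator 1 (q, t) ∂π ∂volume
        = ∫⁻ q : ℝ × ℝ, ∫⁻ t, costSet.indicator 1 (q, t) ∂volume ∂π :=
      by
        have hu : AEMeasurable (Function.uncurry fun (q : ℝ × ℝ) (t : ℝ) =>
            costSet.indicator (1 : (ℝ × ℝ) × ℝ → ℝ≥0∞) (q, t)) (π.prod volume) :=
          (measurable_one.indicator costSet_meas).aemeasurable
        exact (lintegral_lintegral_swap hu).symm
    have rhs1 : ∫⁻ q : ℝ × ℝ, ∫⁻ t, costSet.indicator 1 (q, t) ∂volume ∂π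
        = ∫⁻ q : ℝ × ℝ, ENNReal.ofReal |q.1 - q.2| ∂π := by
      refine lintegral_congr fun q => ?_
      have e : (fun t => costSet.indicator (1 : (ℝ × ℝ) × ℝ → ℝ≥0∞) (q, t))
          = (dset q.1 q.2).indicator (1 : ℝ → ℝ≥0∞) := rfl
      rw [e, cake]
    calc ∫⁻ u, ENNReal.ofReal |quant μ u - quant ν u| ∂mm
        = ∫⁻ t, ∫⁻ u, (sliceSet (quant μ) (quant ν)).indicator 1 (u, t) ∂mm ∂volume := by
          rw [lhs1, swap1]
      _ ≤ ∫⁻ t, ∫⁻ q : ℝ × ℝ, costSet.indicator 1 (q, t) ∂π ∂volume := by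
          refine lintegral_mono fun t => ?_
          rw [mid t, midπ t]
          exact per_t t
      _ = ∫⁻ q : ℝ × ℝ, ENNReal.ofReal |q.1 - q.2| ∂π := by rw [swap2, rhs1]
  have hfin : ∫⁻ q : ℝ × ℝ, ENNReal.ofReal |q.1 - q.2| ∂π ≠ ⊤ := by
    have e : ∀ q : ℝ × ℝ, ENNReal.ofReal |q.1 - q.2| = (‖|q.1 - q.2|‖₊ : ℝ≥0∞) := fun q =>
      (Real.enorm_eq_ofReal (abs_nonneg _)).symm
    rw [lintegral_congr e]
    exact hcost.2.ne
  rw [integral_eq_lintegral_of_nonneg_ae (f := fun u => |quant μ u - quant ν u|)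
      (Filter.Eventually.of_forall fun u => abs_nonneg _)
      ((measurable_quant.sub measurable_quant).abs.aestronglyMeasurable),
    integral_eq_lintegral_of_nonneg_ae (f := fun q : ℝ × ℝ => |q.1 - q.2|)
      (Filter.Eventually.of_forall fun q => abs_nonneg _)
      ((measurable_fst.sub measurable_snd).abs.aestronglyMeasurable)]
  exact ENNReal.toReal_mono hfin key

/-- Lower bound: quantile L¹ distance is at most the Wasserstein distance. -/
lemma quant_dist_le_wasserstein1 {μ ν : Measure ℝ} [IsProbabilityMeasure μ]
    [IsProbabilityMeasure ν]
    (hμ : Integrable (id : ℝ → ℝ) μ) (hν : Integrable (id : ℝ → ℝ) ν) :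
    ∫ u, |quant μ u - quant ν u| ∂mm ≤ wasserstein1 μ ν := by
  refine le_csInf cpl_nonempty ?_
  rintro r ⟨π, hπ, hm1, hm2, rfl⟩
  exact quant_dist_le_coupling hμ hν π hm1 hm2


/-! ### Generic product-measure helpers -/

lemma integrable_comp_fst {α β : Type*} [MeasurableSpace α] [MeasurableSpace β]
    {mα : Measure α} (mβ : Measure β) [IsProbabilityMeasure mα] [IsProbabilityMeasure mβ]
    {f : α → ℝ} (hfm : Measurable f) (hf : Integrable f mα) :
    Integrable (fun z : α × β => f z.1) (mα.prod mβ) := by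
  have hmap : (mα.prod mβ).map Prod.fst = mα := by
    simp [Measure.map_fst_prod, measure_univ]
  have h : Integrable f ((mα.prod mβ).map Prod.fst) := by rwa [hmap]
  simpa [Function.comp_def] using
    (integrable_map_measure hfm.aestronglyMeasurable measurable_fst.aemeasurable).mp h

lemma pi_map_eval {I : ℕ} (m' : Measure ℝ) [IsProbabilityMeasure m'] (i : Fin I) :
    (Measure.pi fun _ : Fin I => m').map (fun u => u i) = m' := by
  refine Measure.ext fun s hs => ?_
  rw [Measure.map_apply (measurable_pi_apply i) hs]
  have e : (fun u : Fin I → ℝ => u i) ⁻¹' s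
      = Set.pi univ (Function.update (fun _ : Fin I => (univ : Set ℝ)) i s) := by
    ext u
    simp only [Set.mem_preimage, Set.mem_pi, Set.mem_univ, true_implies]
    constructor
    · intro h j
      rcases eq_or_ne j i with rfl | hj
      · simpa using h
      · simp [Function.update_of_ne hj]
    · intro h
      simpa using h i
  rw [e, Measure.pi_pi]
  rw [Finset.prod_eq_single i (fun j _ hj => by simp [Function.update_of_ne hj]) (by simp)]
  simp

lemma integrable_comp_eval {I : ℕ} {m' : Measure ℝ} [IsProbabilityMeasure m']
    {g : ℝ → ℝ} (hgm : Measurable g) (hg : Integrable g m') (i : Fin I) :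
    Integrable (fun u : Fin I → ℝ => g (u i)) (Measure.pi fun _ : Fin I => m') := by
  have h : Integrable g ((Measure.pi fun _ : Fin I => m').map (fun u => u i)) := by
    rwa [pi_map_eval]
  simpa [Function.comp_def] using
    (integrable_map_measure hgm.aestronglyMeasurable (measurable_pi_apply i).aemeasurable).mp h

lemma integral_comp_eval {I : ℕ} {m' : Measure ℝ} [IsProbabilityMeasure m']
    {g : ℝ → ℝ} (hgm : Measurable g) (i : Fin I) :
    ∫ u : Fin I → ℝ, g (u i) ∂(Measure.pi fun _ : Fin I => m') = ∫ x, g x ∂m' := by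
  have h := integral_map (μ := Measure.pi fun _ : Fin I => m')
    (φ := fun u => u i) (measurable_pi_apply i).aemeasurable (f := g)
    hgm.aestronglyMeasurable
  rw [pi_map_eval] at h
  exact h.symm

lemma pi_map_quant {I : ℕ} (μ : Measure ℝ) [IsProbabilityMeasure μ] :
    (Measure.pi fun _ : Fin I => mm).map (fun u (i : Fin I) => quant μ (u i))
      = Measure.pi fun _ : Fin I => μ := by
  have hm : Measurable fun (u : Fin I → ℝ) (i : Fin I) => quant μ (u i) :=
    measurable_pi_lambda _ fun i => measurable_quant.comp (measurable_pi_apply i)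
  refine (Measure.pi_eq fun s hs => ?_).symm
  rw [Measure.map_apply hm (MeasurableSet.univ_pi hs)]
  have e : (fun (u : Fin I → ℝ) (i : Fin I) => quant μ (u i)) ⁻¹' Set.pi univ s
      = Set.pi univ fun i => quant μ ⁻¹' s i := by
    ext u
    simp [Set.mem_pi]
  rw [e, Measure.pi_pi]
  refine Finset.prod_congr rfl fun i _ => ?_
  rw [← Measure.map_apply measurable_quant (hs i), map_quant]

/-! ### PsiMap lemmas -/

section Psi

variable {Ω : Type*} [MeasurableSpace Ω] (P : Measure Ω) [IsProbabilityMeasure P]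
  {I : ℕ} (A : Fin I → Ω → ℝ) (T : Ω → ℝ)

lemma psiFun_measurable (hAm : ∀ i, Measurable (A i)) (hTm : Measurable T) :
    Measurable (fun q : Ω × (Fin I → ℝ) => (∑ i, A i q.1 * q.2 i) + T q.1) := by
  refine Measurable.add ?_ (hTm.comp measurable_fst)
  refine Finset.measurable_sum _ fun i _ => ?_
  exact ((hAm i).comp measurable_fst).mul ((measurable_pi_apply i).comp measurable_snd)

lemma psiMap_isProbabilityMeasure (hAm : ∀ i, Measurable (A i)) (hTm : Measurable T)
    (F : Measure ℝ) [IsProbabilityMeasure F] :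
    IsProbabilityMeasure (PsiMap P A T F) :=
  Measure.isProbabilityMeasure_map (psiFun_measurable A T hAm hTm).aemeasurable

lemma psiMap_integrable_aux (hTm : Measurable T) (F : Measure ℝ) [IsProbabilityMeasure F]
    (hAint : ∀ i, Integrable (A i) P) (hTint : Integrable T P)
    (hF : Integrable (id : ℝ → ℝ) F) :
    Integrable (fun q : Ω × (Fin I → ℝ) => (∑ i, A i q.1 * q.2 i) + T q.1)
      (P.prod (Measure.pi fun _ : Fin I => F)) := by
  refine Integrable.add ?_ (integrable_comp_fst _ hTm hTint)
  refine integrable_finset_sum _ fun i _ => ?_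
  have h2 : Integrable (fun u : Fin I → ℝ => u i) (Measure.pi fun _ : Fin I => F) := by
    simpa using integrable_comp_eval (I := I) measurable_id hF i
  exact (hAint i).mul_prod h2

lemma psiMap_integrable (hAm : ∀ i, Measurable (A i)) (hTm : Measurable T)
    (F : Measure ℝ) [IsProbabilityMeasure F]
    (hAint : ∀ i, Integrable (A i) P) (hTint : Integrable T P)
    (hF : Integrable (id : ℝ → ℝ) F) :
    Integrable (id : ℝ → ℝ) (PsiMap P A T F) := by
  rw [PsiMap]
  rw [integrable_map_measure aestronglyMeasurable_id
    (psiFun_measurable A T hAm hTm).aemeasurable]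
  exact psiMap_integrable_aux P A T hTm F hAint hTint hF

lemma psiMap_rep (hAm : ∀ i, Measurable (A i)) (hTm : Measurable T)
    (μ : Measure ℝ) [IsProbabilityMeasure μ] :
    Measure.map (fun q : Ω × (Fin I → ℝ) => (∑ i, A i q.1 * quant μ (q.2 i)) + T q.1)
      (P.prod (Measure.pi fun _ : Fin I => mm)) = PsiMap P A T μ := by
  have hG : Measurable fun (u : Fin I → ℝ) (i : Fin I) => quant μ (u i) :=
    measurable_pi_lambda _ fun i => measurable_quant.comp (measurable_pi_apply i)
  rw [PsiMap, ← pi_map_quant μ, ← Measure.map_id (μ := P),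
    Measure.map_prod_map _ _ measurable_id hG, Measure.map_id,
    Measure.map_map (psiFun_measurable A T hAm hTm) (measurable_id.prodMap hG)]
  rfl


lemma psi_contract (hAm : ∀ i, Measurable (A i)) (hTm : Measurable T)
    (hAint : ∀ i, Integrable (A i) P) (hTint : Integrable T P)
    (μ ν : Measure ℝ) [IsProbabilityMeasure μ] [IsProbabilityMeasure ν]
    (hμ : Integrable (id : ℝ → ℝ) μ) (hν : Integrable (id : ℝ → ℝ) ν) :
    wasserstein1 (PsiMap P A T μ) (PsiMap P A T ν)
      ≤ (∑ i, ∫ ω, |A i ω| ∂P) * ∫ u, |quant μ u - quant ν u| ∂mm := by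
  haveI := psiMap_isProbabilityMeasure P A T hAm hTm μ
  haveI := psiMap_isProbabilityMeasure P A T hAm hTm ν
  have hφm : Measurable (fun q : Ω × (Fin I → ℝ) =>
      (∑ i, A i q.1 * quant μ (q.2 i)) + T q.1) := by
    refine Measurable.add ?_ (hTm.comp measurable_fst)
    refine Finset.measurable_sum _ fun i _ => ?_
    exact ((hAm i).comp measurable_fst).mul
      (measurable_quant.comp ((measurable_pi_apply i).comp measurable_snd))
  have hψm : Measurable (fun q : Ω × (Fin I → ℝ) =>
      (∑ i, A i q.1 * quant ν (q.2 i)) + T q.1) := by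
    refine Measurable.add ?_ (hTm.comp measurable_fst)
    refine Finset.measurable_sum _ fun i _ => ?_
    exact ((hAm i).comp measurable_fst).mul
      (measurable_quant.comp ((measurable_pi_apply i).comp measurable_snd))
  refine le_trans (wasserstein1_le_of_maps (P.prod (Measure.pi fun _ : Fin I => mm))
    hφm hψm (psiMap_rep P A T hAm hTm μ) (psiMap_rep P A T hAm hTm ν)) ?_
  -- integrability facts
  have hΔint : Integrable (fun x => |quant μ x - quant ν x|) mm :=
    ((integrable_quant hμ).sub (integrable_quant hν)).abs
  have hΔm : Measurable (fun x => |quant μ x - quant ν x|) :=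
    (measurable_quant.sub measurable_quant).abs
  have hterm : ∀ i : Fin I, Integrable (fun q : Ω × (Fin I → ℝ) =>
      |A i q.1| * |quant μ (q.2 i) - quant ν (q.2 i)|)
      (P.prod (Measure.pi fun _ : Fin I => mm)) := fun i =>
    ((hAint i).abs).mul_prod (integrable_comp_eval hΔm hΔint i)
  have hφint : Integrable (fun q : Ω × (Fin I → ℝ) =>
      (∑ i, A i q.1 * quant μ (q.2 i)) + T q.1)
      (P.prod (Measure.pi fun _ : Fin I => mm)) := by
    refine Integrable.add (integrable_finset_sum _ fun i _ => ?_)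
      (integrable_comp_fst _ hTm hTint)
    exact (hAint i).mul_prod (integrable_comp_eval measurable_quant (integrable_quant hμ) i)
  have hψint : Integrable (fun q : Ω × (Fin I → ℝ) =>
      (∑ i, A i q.1 * quant ν (q.2 i)) + T q.1)
      (P.prod (Measure.pi fun _ : Fin I => mm)) := by
    refine Integrable.add (integrable_finset_sum _ fun i _ => ?_)
      (integrable_comp_fst _ hTm hTint)
    exact (hAint i).mul_prod (integrable_comp_eval measurable_quant (integrable_quant hν) i)
  have hb : ∀ q : Ω × (Fin I → ℝ),
      |((∑ i, A i q.1 * quant μ (q.2 i)) + T q.1) - ((∑ i, A i q.1 * quant ν (q.2 i)) + T q.1)|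
      ≤ ∑ i, |A i q.1| * |quant μ (q.2 i) - quant ν (q.2 i)| := by
    intro q
    have e : ((∑ i, A i q.1 * quant μ (q.2 i)) + T q.1)
        - ((∑ i, A i q.1 * quant ν (q.2 i)) + T q.1)
        = ∑ i, A i q.1 * (quant μ (q.2 i) - quant ν (q.2 i)) := by
      rw [Finset.sum_congr rfl fun i _ => mul_sub (A i q.1) _ _, Finset.sum_sub_distrib]
      ring
    rw [e]
    refine le_trans (Finset.abs_sum_le_sum_abs _ _) ?_
    refine Finset.sum_le_sum fun i _ => ?_
    rw [abs_mul]
  calc ∫ q, |((∑ i, A i q.1 * quant μ (q.2 i)) + T q.1)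
          - ((∑ i, A i q.1 * quant ν (q.2 i)) + T q.1)|
        ∂(P.prod (Measure.pi fun _ : Fin I => mm))
      ≤ ∫ q, ∑ i, |A i q.1| * |quant μ (q.2 i) - quant ν (q.2 i)|
        ∂(P.prod (Measure.pi fun _ : Fin I => mm)) :=
        integral_mono ((hφint.sub hψint).abs)
          (integrable_finset_sum _ fun i _ => hterm i) hb
    _ = ∑ i, ∫ q, |A i q.1| * |quant μ (q.2 i) - quant ν (q.2 i)|
        ∂(P.prod (Measure.pi fun _ : Fin I => mm)) :=
        integral_finset_sum _ fun i _ => hterm i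
    _ = ∑ i, (∫ ω, |A i ω| ∂P) * ∫ u, |quant μ u - quant ν u| ∂mm := by
        refine Finset.sum_congr rfl fun i _ => ?_
        rw [integral_prod_mul (fun ω => |A i ω|)
          (fun u : Fin I → ℝ => |quant μ (u i) - quant ν (u i)|)]
        rw [integral_comp_eval hΔm i]
    _ = (∑ i, ∫ ω, |A i ω| ∂P) * ∫ u, |quant μ u - quant ν u| ∂mm :=
        (Finset.sum_mul _ _ _).symm

end Psi

/-- Separation: measures with a.e. equal quantiles coincide. -/
lemma eq_of_quant_dist_zero {μ ν : Measure ℝ} [IsProbabilityMeasure μ] [IsProbabilityMeasure ν]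
    (hμ : Integrable (id : ℝ → ℝ) μ) (hν : Integrable (id : ℝ → ℝ) ν)
    (h : ∫ u, |quant μ u - quant ν u| ∂mm = 0) : μ = ν := by
  have hint : Integrable (fun u => |quant μ u - quant ν u|) mm :=
    ((integrable_quant hμ).sub (integrable_quant hν)).abs
  have hae : (fun u => |quant μ u - quant ν u|) =ᵐ[mm] 0 :=
    (integral_eq_zero_iff_of_nonneg_ae (Filter.Eventually.of_forall fun u => abs_nonneg _)
      hint).mp h
  have heq : quant μ =ᵐ[mm] quant ν := by
    filter_upwards [hae] with u hu
    have : |quant μ u - quant ν u| = 0 := hu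
    have := abs_eq_zero.mp this
    linarith [sub_eq_zero.mp this]
  calc μ = mm.map (quant μ) := map_quant.symm
    _ = mm.map (quant ν) := Measure.map_congr heq
    _ = ν := map_quant

end WassersteinAux
end

open WassersteinAux



end WassersteinProofs

open WassersteinAux

/-- If `Σ_i E|A^{(i)}| < 1` and `E|T| < ∞`, then `Ψ` is a strict contraction, with
Lipschitz constant `Σ_i E|A^{(i)}|`, on the space of probability measures on ℝ with
finite first moment equipped with the Wasserstein-1 metric; consequently it has a
unique fixed point in this space. -/
theorem psi_strict_contraction_and_unique_fixed_point
    {Ω : Type*} [MeasurableSpace Ω] (P : Measure Ω) [IsProbabilityMeasure P]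
    {I : ℕ} (hI : 0 < I) (A : Fin I → Ω → ℝ) (T : Ω → ℝ)
    (hAm : ∀ i, Measurable (A i)) (hTm : Measurable T)
    (hAint : ∀ i, Integrable (A i) P) (hTint : Integrable T P)
    (hA : ∑ i, ∫ ω, |A i ω| ∂P < 1) :
    (∀ μ ν : Measure ℝ,
      IsProbabilityMeasure μ → Integrable (id : ℝ → ℝ) μ →
      IsProbabilityMeasure ν → Integrable (id : ℝ → ℝ) ν →
      wasserstein1 (PsiMap P A T μ) (PsiMap P A T ν)
        ≤ (∑ i, ∫ ω, |A i ω| ∂P) * wasserstein1 μ ν)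
    ∧ ∃! F : Measure ℝ,
        (IsProbabilityMeasure F ∧ Integrable (id : ℝ → ℝ) F) ∧ PsiMap P A T F = F := by
  have hc0 : 0 ≤ ∑ i, ∫ ω, |A i ω| ∂P :=
    Finset.sum_nonneg fun i _ => integral_nonneg fun ω => abs_nonneg _
  constructor
  · intro μ ν hμp hμi hνp hνi
    haveI := hμp; haveI := hνp
    refine le_trans (psi_contract P A T hAm hTm hAint hTint μ ν hμi hνi) ?_
    exact mul_le_mul_of_nonneg_left (quant_dist_le_wasserstein1 hμi hνi) hc0
  -- Existence and uniqueness of the fixed point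
  set c := ∑ i, ∫ ω, |A i ω| ∂P with hc
  -- base point: Dirac mass at 0
  have hQbase : Integrable (id : ℝ → ℝ) (Measure.dirac (0:ℝ)) := by
    constructor
    · exact aestronglyMeasurable_id
    · show (∫⁻ a, ‖(id : ℝ → ℝ) a‖₊ ∂Measure.dirac 0) < ⊤
      rw [lintegral_dirac]
      simp
  set μs : ℕ → Measure ℝ := fun n => (PsiMap P A T)^[n] (Measure.dirac 0) with hμs
  have hsucc : ∀ n, μs (n+1) = PsiMap P A T (μs n) := fun n => by
    simp only [hμs]
    exact Function.iterate_succ_apply' _ _ _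
  have hD : ∀ n, IsProbabilityMeasure (μs n) ∧ Integrable (id : ℝ → ℝ) (μs n) := by
    intro n
    induction n with
    | zero =>
      constructor
      · simp only [hμs, Function.iterate_zero_apply]
        infer_instance
      · simpa only [hμs, Function.iterate_zero_apply] using hQbase
    | succ n ih =>
      haveI := ih.1
      rw [hsucc n]
      exact ⟨psiMap_isProbabilityMeasure P A T hAm hTm _,
        psiMap_integrable P A T hAm hTm _ hAint hTint ih.2⟩
  have hqint : ∀ n, Integrable (quant (μs n)) mm := fun n => by
    haveI := (hD n).1
    exact integrable_quant (hD n).2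
  set K := ∫ u, |quant (μs 1) u - quant (μs 0) u| ∂mm with hK
  have hgeo : ∀ n, ∫ u, |quant (μs (n+1)) u - quant (μs n) u| ∂mm ≤ c ^ n * K := by
    intro n
    induction n with
    | zero => simp [hK]
    | succ n ih =>
      haveI := (hD n).1; haveI := (hD (n+1)).1; haveI := (hD (n+2)).1
      calc ∫ u, |quant (μs (n+2)) u - quant (μs (n+1)) u| ∂mm
          ≤ wasserstein1 (μs (n+2)) (μs (n+1)) :=
            quant_dist_le_wasserstein1 (hD (n+2)).2 (hD (n+1)).2
        _ = wasserstein1 (PsiMap P A T (μs (n+1))) (PsiMap P A T (μs n)) := by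
            rw [hsucc (n+1), hsucc n]
        _ ≤ c * ∫ u, |quant (μs (n+1)) u - quant (μs n) u| ∂mm :=
            psi_contract P A T hAm hTm hAint hTint _ _ (hD (n+1)).2 (hD n).2
        _ ≤ c * (c ^ n * K) := mul_le_mul_of_nonneg_left ih hc0
        _ = c ^ (n+1) * K := by ring
  set E : ℕ → (ℝ →₁[mm] ℝ) := fun n => (hqint n).toL1 (quant (μs n)) with hE
  have hdist : ∀ n, dist (E n) (E (n+1)) = ∫ u, |quant (μs (n+1)) u - quant (μs n) u| ∂mm := by
    intro n
    rw [hE, dist_eq_norm]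
    simp only
    rw [← Integrable.toL1_sub, L1.norm_of_fun_eq_integral_norm]
    refine integral_congr_ae (Filter.Eventually.of_forall fun u => ?_)
    simp [Real.norm_eq_abs, abs_sub_comm]
  have hcauchy : CauchySeq E := by
    refine cauchySeq_of_le_geometric c K hA fun n => ?_
    rw [hdist n]
    calc ∫ u, |quant (μs (n+1)) u - quant (μs n) u| ∂mm ≤ c ^ n * K := hgeo n
      _ = K * c ^ n := mul_comm _ _
  obtain ⟨G, hG⟩ := cauchySeq_tendsto_of_complete hcauchy
  set g0 := (Lp.aestronglyMeasurable G).mk ⇑G with hg0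
  have hg0m : StronglyMeasurable g0 := (Lp.aestronglyMeasurable G).stronglyMeasurable_mk
  have hg0ae : ⇑G =ᵐ[mm] g0 := (Lp.aestronglyMeasurable G).ae_eq_mk
  have hg0int : Integrable g0 mm := (L1.integrable_coeFn G).congr hg0ae
  set ν := mm.map g0 with hν
  haveI hνp : IsProbabilityMeasure ν :=
    Measure.isProbabilityMeasure_map hg0m.measurable.aemeasurable
  have hνint : Integrable (id : ℝ → ℝ) ν := by
    rw [hν, integrable_map_measure aestronglyMeasurable_id hg0m.measurable.aemeasurable]
    simpa [Function.comp] using hg0int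
  have hGL1 : hg0int.toL1 g0 = G := by
    rw [← Integrable.toL1_coeFn G (L1.integrable_coeFn G)]
    exact (Integrable.toL1_eq_toL1_iff _ _ _ _).mpr hg0ae.symm
  have hlim : Filter.Tendsto (fun n => ∫ u, |quant (μs n) u - g0 u| ∂mm)
      Filter.atTop (nhds 0) := by
    have h1 : Filter.Tendsto (fun n => dist (E n) G) Filter.atTop (nhds 0) :=
      tendsto_iff_dist_tendsto_zero.mp hG
    refine h1.congr fun n => ?_
    rw [hE, dist_eq_norm, ← hGL1]
    simp only
    rw [← Integrable.toL1_sub, L1.norm_of_fun_eq_integral_norm]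
    refine integral_congr_ae (Filter.Eventually.of_forall fun u => ?_)
    simp [Real.norm_eq_abs]
  have hup : ∀ n, wasserstein1 (μs n) ν ≤ ∫ u, |quant (μs n) u - g0 u| ∂mm := fun n => by
    haveI := (hD n).1
    exact wasserstein1_le_of_maps mm measurable_quant hg0m.measurable map_quant hν.symm
  have hqν : ∀ n, ∫ u, |quant ν u - quant (μs n) u| ∂mm
      ≤ ∫ u, |quant (μs n) u - g0 u| ∂mm := fun n => by
    haveI := (hD n).1
    refine le_trans (quant_dist_le_wasserstein1 hνint (hD n).2) ?_
    refine le_trans (wasserstein1_le_of_maps mm hg0m.measurable measurable_quant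
      hν.symm map_quant) ?_
    refine le_of_eq (integral_congr_ae (Filter.Eventually.of_forall fun u => ?_))
    exact abs_sub_comm _ _
  haveI hΨνp : IsProbabilityMeasure (PsiMap P A T ν) :=
    psiMap_isProbabilityMeasure P A T hAm hTm ν
  have hΨνint : Integrable (id : ℝ → ℝ) (PsiMap P A T ν) :=
    psiMap_integrable P A T hAm hTm ν hAint hTint hνint
  have htri : ∀ n, ∫ u, |quant (PsiMap P A T ν) u - quant ν u| ∂mm
      ≤ c * (∫ u, |quant (μs n) u - g0 u| ∂mm) + ∫ u, |quant (μs (n+1)) u - g0 u| ∂mm := by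
    intro n
    haveI := (hD n).1; haveI := (hD (n+1)).1
    have i1 : Integrable (fun u => |quant (PsiMap P A T ν) u - quant (μs (n+1)) u|) mm :=
      ((integrable_quant hΨνint).sub (integrable_quant (hD (n+1)).2)).abs
    have i2 : Integrable (fun u => |quant (μs (n+1)) u - quant ν u|) mm :=
      ((integrable_quant (hD (n+1)).2).sub (integrable_quant hνint)).abs
    have t1 : ∫ u, |quant (PsiMap P A T ν) u - quant ν u| ∂mm
        ≤ (∫ u, |quant (PsiMap P A T ν) u - quant (μs (n+1)) u| ∂mm)
          + ∫ u, |quant (μs (n+1)) u - quant ν u| ∂mm := by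
      rw [← integral_add i1 i2]
      exact integral_mono ((integrable_quant hΨνint).sub (integrable_quant hνint)).abs
        (i1.add i2) fun u => abs_sub_le _ _ _
    have t2 : ∫ u, |quant (PsiMap P A T ν) u - quant (μs (n+1)) u| ∂mm
        ≤ c * ∫ u, |quant ν u - quant (μs n) u| ∂mm := by
      refine le_trans (quant_dist_le_wasserstein1 hΨνint (hD (n+1)).2) ?_
      calc wasserstein1 (PsiMap P A T ν) (μs (n+1))
          = wasserstein1 (PsiMap P A T ν) (PsiMap P A T (μs n)) := by rw [hsucc n]
        _ ≤ c * ∫ u, |quant ν u - quant (μs n) u| ∂mm :=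
            psi_contract P A T hAm hTm hAint hTint ν (μs n) hνint (hD n).2
    have t3 : ∫ u, |quant (μs (n+1)) u - quant ν u| ∂mm
        ≤ ∫ u, |quant (μs (n+1)) u - g0 u| ∂mm := by
      refine le_trans (le_of_eq (integral_congr_ae
        (Filter.Eventually.of_forall fun u => abs_sub_comm _ _))) (hqν (n+1))
    have t4 : c * ∫ u, |quant ν u - quant (μs n) u| ∂mm
        ≤ c * ∫ u, |quant (μs n) u - g0 u| ∂mm :=
      mul_le_mul_of_nonneg_left (hqν n) hc0
    linarith
  have hzero : ∫ u, |quant (PsiMap P A T ν) u - quant ν u| ∂mm = 0 := by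
    have hnn : 0 ≤ ∫ u, |quant (PsiMap P A T ν) u - quant ν u| ∂mm :=
      integral_nonneg fun u => abs_nonneg _
    have hle0 : ∫ u, |quant (PsiMap P A T ν) u - quant ν u| ∂mm ≤ 0 := by
      have hlim2 : Filter.Tendsto
          (fun n => c * (∫ u, |quant (μs n) u - g0 u| ∂mm)
            + ∫ u, |quant (μs (n+1)) u - g0 u| ∂mm) Filter.atTop (nhds 0) := by
        have h2 := (hlim.const_mul c).add (hlim.comp (Filter.tendsto_add_atTop_nat 1))
        simpa using h2
      exact ge_of_tendsto' hlim2 htri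
    linarith
  have hfix : PsiMap P A T ν = ν := eq_of_quant_dist_zero hΨνint hνint hzero
  refine ⟨ν, ⟨⟨hνp, hνint⟩, hfix⟩, ?_⟩
  rintro F ⟨⟨hFp, hFi⟩, hFfix⟩
  haveI := hFp
  have hr : ∫ u, |quant F u - quant ν u| ∂mm ≤ c * ∫ u, |quant F u - quant ν u| ∂mm := by
    refine le_trans (quant_dist_le_wasserstein1 hFi hνint) ?_
    calc wasserstein1 F ν = wasserstein1 (PsiMap P A T F) (PsiMap P A T ν) := by
          rw [hFfix, hfix]
      _ ≤ c * ∫ u, |quant F u - quant ν u| ∂mm :=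
          psi_contract P A T hAm hTm hAint hTint F ν hFi hνint
  have hrn : 0 ≤ ∫ u, |quant F u - quant ν u| ∂mm := integral_nonneg fun u => abs_nonneg _
  have hc1 : c < 1 := hA
  have hr0 : ∫ u, |quant F u - quant ν u| ∂mm = 0 := by nlinarith
  exact eq_of_quant_dist_zero hFi hνint hr0
end

section
/- Let c ∈ [0,1] and let X_c be the unique integrable solution of X_c = ((1-2c)U+c)^2 X_c' + ((2c-1)U+1-c)^2 X_c'' + T(c,U), where T(c,u) = ((1-c)/2)(u^2+(1-u)^2) + c·u(1-u), U is uniform on [0,1], and X_c', X_c'' are independent copies independent of U. Then E[X_c] = (2-c)/(2(1+2c-2c^2)) and Var(X_c) = (1-c)^2(1-2c)^2 / (4(1+2c-2c^2)^2 (3+6c-8c^2+4c^3-2c^4)). -/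
/-!
Write the equation as `X =ᵈ A(U) X' + B(U) X'' + T(U)`. Taking expectations, with `X', X''`
copies of `X` independent of `U`, gives a linear equation for `E X` whose coefficient `E[A(U) + B(U)] = 2(1 - c + c²)/3` is `< 1`.
Squaring gives a linear equation for `E X²` with coefficient `E[A(U)² + B(U)²] < 1`, but only
once `E X² < ∞` is known. For that, apply the equation to the truncated square
`|y| min(|y|, n)`: since `A, B, T ∈ [0, 1]`, its mean `Sₙ` satisfies
`Sₙ ≤ E[A(U) + B(U)] Sₙ + K` with `K` depending only on `E|X|`, so `Sₙ` is bounded and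
monotone convergence gives `E X² < ∞`.
-/

open MeasureTheory ProbabilityTheory Set

lemma min_le_min_add_sub {y z : ℝ} (a : ℝ) (hyz : y ≤ z) : min z a ≤ min y a + (z - y) := by
  calc min z a ≤ min (y + (z - y)) (a + (z - y)) := by
        rw [add_sub_cancel]; exact min_le_min_left z (by linarith)
    _ = min y a + (z - y) := min_add_add_right y a (z - y)

noncomputable def truncSq (n : ℕ) (y : ℝ) : ℝ := |y| * min |y| n

section TruncSq

variable (n : ℕ)

@[fun_prop]
lemma measurable_truncSq : Measurable (truncSq n) := by
  unfold truncSq; fun_prop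

lemma truncSq_nonneg (y : ℝ) : 0 ≤ truncSq n y :=
  mul_nonneg (abs_nonneg y) (le_min (abs_nonneg y) n.cast_nonneg)

lemma truncSq_le_mul_abs (y : ℝ) : truncSq n y ≤ n * |y| := by
  rw [truncSq, mul_comm]
  exact mul_le_mul_of_nonneg_right (min_le_right _ _) (abs_nonneg y)

lemma truncSq_le_of_abs_le {y z : ℝ} (h : |y| ≤ |z|) : truncSq n y ≤ truncSq n z :=
  mul_le_mul h (min_le_min_right _ h) (le_min (abs_nonneg y) n.cast_nonneg) (abs_nonneg z)

lemma monotone_truncSq (y : ℝ) : Monotone fun n : ℕ => truncSq n y := fun _ _ hmn =>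
  mul_le_mul_of_nonneg_left (min_le_min_left _ (Nat.cast_le.2 hmn)) (abs_nonneg y)

lemma iSup_ofReal_truncSq (y : ℝ) :
    ⨆ n : ℕ, ENNReal.ofReal (truncSq n y) = ENNReal.ofReal (y ^ 2) := by
  refine le_antisymm (iSup_le fun n => ENNReal.ofReal_le_ofReal ?_) ?_
  · rw [← sq_abs, sq]
    exact mul_le_mul_of_nonneg_left (min_le_left _ _) (abs_nonneg y)
  · refine le_iSup_of_le ⌈|y|⌉₊ (ENNReal.ofReal_le_ofReal ?_)
    rw [truncSq, min_eq_left (Nat.le_ceil |y|), ← sq, sq_abs]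

lemma truncSq_affine_le {a b t : ℝ} (ha : a ∈ Icc (0:ℝ) 1) (hb : b ∈ Icc (0:ℝ) 1)
    (ht : t ∈ Icc (0:ℝ) 1) (x y : ℝ) :
    truncSq n (a * x + b * y + t) ≤
      a * truncSq n x + b * truncSq n y + (1 + 2 * (|x| * |y| + |x| + |y|)) := by
  obtain ⟨ha0, ha1⟩ := ha
  obtain ⟨hb0, hb1⟩ := hb
  obtain ⟨ht0, ht1⟩ := ht
  set p := a * |x|
  set q := b * |y|
  have hp : p ≤ |x| := mul_le_of_le_one_left (abs_nonneg x) ha1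
  have hq : q ≤ |y| := mul_le_of_le_one_left (abs_nonneg y) hb1
  have hp0 : 0 ≤ p := mul_nonneg ha0 (abs_nonneg x)
  have hq0 : 0 ≤ q := mul_nonneg hb0 (abs_nonneg y)
  have habs : |a * x + b * y + t| ≤ |p + q + t| := by
    rw [abs_of_nonneg (by positivity : 0 ≤ p + q + t)]
    calc |a * x + b * y + t| ≤ |a * x| + |b * y| + |t| := abs_add_three _ _ _
      _ = p + q + t := by
        rw [abs_mul, abs_mul, abs_of_nonneg ha0, abs_of_nonneg hb0, abs_of_nonneg ht0]
  set z := p + q + t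
  have hz : truncSq n z = p * min z n + q * min z n + t * min z n := by
    rw [truncSq, abs_of_nonneg (by positivity : 0 ≤ z)]; ring
  have hm : ∀ w, 0 ≤ w → w ≤ z → w * min z n ≤ w * min w n + w * (z - w) := fun w hw hwz => by
    rw [← mul_add]; exact mul_le_mul_of_nonneg_left (min_le_min_add_sub _ hwz) hw
  have hpx : p * min p n ≤ a * truncSq n x := by
    rw [truncSq, ← mul_assoc]
    exact mul_le_mul_of_nonneg_left (min_le_min_right _ hp) hp0
  have hqy : q * min q n ≤ b * truncSq n y := by
    rw [truncSq, ← mul_assoc]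
    exact mul_le_mul_of_nonneg_left (min_le_min_right _ hq) hq0
  have htt : t * min t n ≤ 1 :=
    (mul_le_mul_of_nonneg_left (min_le_left t n) ht0).trans (mul_le_one₀ ht1 ht0 ht1)
  have := hm p hp0 (by linarith)
  have := hm q hq0 (by linarith)
  have := hm t ht0 (by linarith)
  calc truncSq n (a * x + b * y + t) ≤ truncSq n z := truncSq_le_of_abs_le n habs
    _ ≤ _ := by
      rw [hz]
      linarith [mul_le_mul hp hq hq0 (abs_nonneg x), mul_le_mul hp ht1 ht0 (abs_nonneg x),
        mul_le_mul hq ht1 ht0 (abs_nonneg y)]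

variable {Ω : Type*} [MeasurableSpace Ω] {μ : Measure Ω} {X : Ω → ℝ}

lemma integrable_truncSq (hX : Integrable X μ) : Integrable (fun ω => truncSq n (X ω)) μ :=
  (hX.abs.const_mul n).mono'
    ((measurable_truncSq n).comp_aemeasurable hX.aemeasurable).aestronglyMeasurable <|
    ae_of_all _ fun ω => by
      rw [Real.norm_of_nonneg (truncSq_nonneg n _)]; exact truncSq_le_mul_abs n _

lemma memLp_two_of_integral_truncSq_le (hX : Integrable X μ) {C : ℝ}
    (hC : ∀ n : ℕ, ∫ ω, truncSq n (X ω) ∂μ ≤ C) : MemLp X 2 μ := by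
  rw [memLp_two_iff_integrable_sq hX.aestronglyMeasurable]
  refine ⟨hX.aestronglyMeasurable.pow 2, ?_⟩
  rw [hasFiniteIntegral_iff_ofReal (ae_of_all _ fun ω => sq_nonneg (X ω))]
  calc ∫⁻ ω, ENNReal.ofReal (X ω ^ 2) ∂μ
      = ∫⁻ ω, ⨆ n : ℕ, ENNReal.ofReal (truncSq n (X ω)) ∂μ := by
        simp_rw [iSup_ofReal_truncSq]
    _ = ⨆ n : ℕ, ∫⁻ ω, ENNReal.ofReal (truncSq n (X ω)) ∂μ :=
        lintegral_iSup' (fun n => by fun_prop)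
          (ae_of_all _ fun ω _ _ hmn => ENNReal.ofReal_le_ofReal (monotone_truncSq _ hmn))
    _ ≤ ENNReal.ofReal C := iSup_le fun n => by
        rw [← ofReal_integral_eq_lintegral_ofReal (integrable_truncSq n hX)
          (ae_of_all _ fun ω => truncSq_nonneg n _)]
        exact ENNReal.ofReal_le_ofReal (hC n)
    _ < ⊤ := ENNReal.ofReal_lt_top

end TruncSq

structure SolvesDistribEq {Ω S : Type*} [MeasurableSpace Ω] [MeasurableSpace S] (P : Measure Ω)
    (A B T : S → ℝ) (U : Ω → S) (X X' X'' : Ω → ℝ) : Prop where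
  measurable_A : Measurable A
  measurable_B : Measurable B
  measurable_T : Measurable T
  mem_A : ∀ᵐ ω ∂P, A (U ω) ∈ Icc (0:ℝ) 1
  mem_B : ∀ᵐ ω ∂P, B (U ω) ∈ Icc (0:ℝ) 1
  mem_T : ∀ᵐ ω ∂P, T (U ω) ∈ Icc (0:ℝ) 1
  aemeasurable_U : AEMeasurable U P
  identDistrib_left : IdentDistrib X' X P P
  identDistrib_right : IdentDistrib X'' X P P
  indepFun_left_right : IndepFun X' X'' P
  indepFun_pair : IndepFun (fun ω => (X' ω, X'' ω)) U P
  integrable : Integrable X P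
  identDistrib_eq : IdentDistrib X (fun ω => A (U ω) * X' ω + B (U ω) * X'' ω + T (U ω)) P P

namespace SolvesDistribEq

variable {Ω S : Type*} [MeasurableSpace Ω] [MeasurableSpace S] {P : Measure Ω}
  {A B T : S → ℝ} {U : Ω → S} {X X' X'' : Ω → ℝ}

lemma of_iIndepFun {U : Ω → ℝ} {A B T : ℝ → ℝ} (hA : Measurable A) (hB : Measurable B)
    (hT : Measurable T) (hAU : ∀ᵐ ω ∂P, A (U ω) ∈ Icc (0:ℝ) 1)
    (hBU : ∀ᵐ ω ∂P, B (U ω) ∈ Icc (0:ℝ) 1) (hTU : ∀ᵐ ω ∂P, T (U ω) ∈ Icc (0:ℝ) 1)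
    (hUm : Measurable U) (hXm : Measurable X) (hX'm : Measurable X') (hX''m : Measurable X'')
    (hX' : P.map X' = P.map X) (hX'' : P.map X'' = P.map X) (hindep : iIndepFun ![X', X'', U] P)
    (hX : Integrable X P)
    (heq : P.map X = P.map (fun ω => A (U ω) * X' ω + B (U ω) * X'' ω + T (U ω))) :
    SolvesDistribEq P A B T U X X' X'' where
  measurable_A := hA
  measurable_B := hB
  measurable_T := hT
  mem_A := hAU
  mem_B := hBU
  mem_T := hTU
  aemeasurable_U := hUm.aemeasurable
  identDistrib_left := ⟨hX'm.aemeasurable, hXm.aemeasurable, hX'⟩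
  identDistrib_right := ⟨hX''m.aemeasurable, hXm.aemeasurable, hX''⟩
  indepFun_left_right := hindep.indepFun (i := 0) (j := 1) (by decide)
  indepFun_pair := by
    simpa using hindep.indepFun_prodMk (fun i => by fin_cases i <;> assumption) 0 1 2
      (by decide) (by decide)
  integrable := hX
  identDistrib_eq := ⟨hXm.aemeasurable, by fun_prop, heq⟩

lemma integrable_left (h : SolvesDistribEq P A B T U X X' X'') : Integrable X' P :=
  h.identDistrib_left.integrable_iff.2 h.integrable

lemma integrable_right (h : SolvesDistribEq P A B T U X X' X'') : Integrable X'' P :=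
  h.identDistrib_right.integrable_iff.2 h.integrable

lemma integrable_comp_mul (h : SolvesDistribEq P A B T U X X' X'') {g : S → ℝ}
    (hg : Measurable g) (hgU : ∀ᵐ ω ∂P, g (U ω) ∈ Icc (0:ℝ) 1) {f : Ω → ℝ}
    (hf : Integrable f P) : Integrable (fun ω => g (U ω) * f ω) P :=
  hf.bdd_mul (hg.comp_aemeasurable h.aemeasurable_U).aestronglyMeasurable <| by
    filter_upwards [hgU] with ω hω
    rw [Real.norm_of_nonneg hω.1]; exact hω.2

lemma integral_comp (h : SolvesDistribEq P A B T U X X' X'') {g : S → ℝ} (hg : Measurable g) :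
    ∫ ω, g (U ω) ∂P = ∫ s, g s ∂P.map U :=
  (integral_map h.aemeasurable_U hg.aestronglyMeasurable).symm

lemma integral_comp_left (h : SolvesDistribEq P A B T U X X' X'') {φ : ℝ → ℝ}
    (hφ : Measurable φ) : ∫ ω, φ (X' ω) ∂P = ∫ ω, φ (X ω) ∂P :=
  (h.identDistrib_left.comp hφ).integral_eq

lemma integral_comp_right (h : SolvesDistribEq P A B T U X X' X'') {φ : ℝ → ℝ}
    (hφ : Measurable φ) : ∫ ω, φ (X'' ω) ∂P = ∫ ω, φ (X ω) ∂P :=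
  (h.identDistrib_right.comp hφ).integral_eq

lemma integral_mul_comp_left (h : SolvesDistribEq P A B T U X X' X'') {g : S → ℝ}
    (hg : Measurable g) {φ : ℝ → ℝ} (hφ : Measurable φ) :
    ∫ ω, g (U ω) * φ (X' ω) ∂P = (∫ s, g s ∂P.map U) * ∫ ω, φ (X ω) ∂P := by
  have hind : IndepFun U X' P := (h.indepFun_pair.comp measurable_fst measurable_id).symm
  rw [hind.integral_fun_comp_mul_comp h.aemeasurable_U h.identDistrib_left.aemeasurable_fst
    hg.aestronglyMeasurable hφ.aestronglyMeasurable, h.integral_comp hg, h.integral_comp_left hφ]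

lemma integral_mul_comp_right (h : SolvesDistribEq P A B T U X X' X'') {g : S → ℝ}
    (hg : Measurable g) {φ : ℝ → ℝ} (hφ : Measurable φ) :
    ∫ ω, g (U ω) * φ (X'' ω) ∂P = (∫ s, g s ∂P.map U) * ∫ ω, φ (X ω) ∂P := by
  have hind : IndepFun U X'' P := (h.indepFun_pair.comp measurable_snd measurable_id).symm
  rw [hind.integral_fun_comp_mul_comp h.aemeasurable_U h.identDistrib_right.aemeasurable_fst
    hg.aestronglyMeasurable hφ.aestronglyMeasurable, h.integral_comp hg, h.integral_comp_right hφ]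

lemma integral_comp_mul_comp (h : SolvesDistribEq P A B T U X X' X'') {φ : ℝ → ℝ}
    (hφ : Measurable φ) : ∫ ω, φ (X' ω) * φ (X'' ω) ∂P = (∫ ω, φ (X ω) ∂P) ^ 2 := by
  rw [h.indepFun_left_right.integral_fun_comp_mul_comp h.identDistrib_left.aemeasurable_fst
    h.identDistrib_right.aemeasurable_fst hφ.aestronglyMeasurable hφ.aestronglyMeasurable,
    h.integral_comp_left hφ, h.integral_comp_right hφ, sq]

lemma integral_mul_comp_mul (h : SolvesDistribEq P A B T U X X' X'') {g : S → ℝ}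
    (hg : Measurable g) :
    ∫ ω, g (U ω) * (X' ω * X'' ω) ∂P = (∫ s, g s ∂P.map U) * (∫ ω, X ω ∂P) ^ 2 := by
  have hpair : AEMeasurable (fun ω => (X' ω, X'' ω)) P :=
    h.identDistrib_left.aemeasurable_fst.prodMk h.identDistrib_right.aemeasurable_fst
  rw [h.indepFun_pair.symm.integral_fun_comp_mul_comp (f := g) (g := fun p => p.1 * p.2)
    h.aemeasurable_U hpair hg.aestronglyMeasurable (by fun_prop), h.integral_comp hg,
    h.integral_comp_mul_comp (φ := fun x => x) measurable_id']

lemma integral_eq [IsProbabilityMeasure P] (h : SolvesDistribEq P A B T U X X' X'') :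
    ∫ ω, X ω ∂P =
      (∫ s, A s ∂P.map U + ∫ s, B s ∂P.map U) * ∫ ω, X ω ∂P + ∫ s, T s ∂P.map U := by
  have iA := h.integrable_comp_mul h.measurable_A h.mem_A h.integrable_left
  have iB := h.integrable_comp_mul h.measurable_B h.mem_B h.integrable_right
  have iT : Integrable (fun ω => T (U ω)) P :=
    .of_mem_Icc 0 1 (h.measurable_T.comp_aemeasurable h.aemeasurable_U) h.mem_T
  calc ∫ ω, X ω ∂P = ∫ ω, A (U ω) * X' ω + B (U ω) * X'' ω + T (U ω) ∂P :=
        h.identDistrib_eq.integral_eq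
    _ = _ := by
      rw [integral_add (iA.fun_add iB) iT, integral_add iA iB,
        h.integral_mul_comp_left h.measurable_A (φ := fun x => x) measurable_id',
        h.integral_mul_comp_right h.measurable_B (φ := fun x => x) measurable_id',
        h.integral_comp h.measurable_T]
      ring

lemma integral_truncSq_le [IsProbabilityMeasure P] (h : SolvesDistribEq P A B T U X X' X'')
    (n : ℕ) :
    ∫ ω, truncSq n (X ω) ∂P ≤
      (∫ s, A s ∂P.map U + ∫ s, B s ∂P.map U) * ∫ ω, truncSq n (X ω) ∂P
        + (1 + 2 * ((∫ ω, |X ω| ∂P) ^ 2 + 2 * ∫ ω, |X ω| ∂P)) := by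
  have iA := h.integrable_comp_mul h.measurable_A h.mem_A (integrable_truncSq n h.integrable_left)
  have iB := h.integrable_comp_mul h.measurable_B h.mem_B (integrable_truncSq n h.integrable_right)
  have iXX : Integrable (fun ω => |X' ω| * |X'' ω|) P :=
    (h.indepFun_left_right.comp measurable_abs measurable_abs).integrable_mul
      h.integrable_left.abs h.integrable_right.abs
  have iS := (iXX.fun_add h.integrable_left.abs).fun_add h.integrable_right.abs
  have iK := (integrable_const (1:ℝ)).fun_add (iS.const_mul 2)
  have iF := integrable_truncSq n (h.identDistrib_eq.integrable_iff.1 h.integrable)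
  calc ∫ ω, truncSq n (X ω) ∂P
      = ∫ ω, truncSq n (A (U ω) * X' ω + B (U ω) * X'' ω + T (U ω)) ∂P :=
        (h.identDistrib_eq.comp (measurable_truncSq n)).integral_eq
    _ ≤ ∫ ω, A (U ω) * truncSq n (X' ω) + B (U ω) * truncSq n (X'' ω)
          + (1 + 2 * (|X' ω| * |X'' ω| + |X' ω| + |X'' ω|)) ∂P := by
        refine integral_mono_ae iF ((iA.fun_add iB).fun_add iK) ?_
        filter_upwards [h.mem_A, h.mem_B, h.mem_T] with ω hA hB hT
        exact truncSq_affine_le n hA hB hT _ _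
    _ = _ := by
        rw [integral_add (iA.fun_add iB) iK, integral_add iA iB,
          h.integral_mul_comp_left h.measurable_A (measurable_truncSq n),
          h.integral_mul_comp_right h.measurable_B (measurable_truncSq n),
          integral_add (integrable_const 1) (iS.const_mul 2), integral_const_mul,
          integral_add (iXX.fun_add h.integrable_left.abs) h.integrable_right.abs,
          integral_add iXX h.integrable_left.abs, h.integral_comp_mul_comp measurable_abs,
          h.integral_comp_left measurable_abs, h.integral_comp_right measurable_abs]
        simp only [integral_const, probReal_univ, smul_eq_mul, mul_one]
        ring

lemma memLp_two [IsProbabilityMeasure P] (h : SolvesDistribEq P A B T U X X' X'')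
    (hAB : ∫ s, A s ∂P.map U + ∫ s, B s ∂P.map U < 1) : MemLp X 2 P := by
  set r := ∫ s, A s ∂P.map U + ∫ s, B s ∂P.map U
  set K := 1 + 2 * ((∫ ω, |X ω| ∂P) ^ 2 + 2 * ∫ ω, |X ω| ∂P)
  refine memLp_two_of_integral_truncSq_le h.integrable (C := K / (1 - r)) fun n => ?_
  rw [le_div_iff₀ (sub_pos.2 hAB)]
  linarith [h.integral_truncSq_le n]

lemma integral_sq_eq_sum_integral [IsProbabilityMeasure P]
    (h : SolvesDistribEq P A B T U X X' X'') (hX : MemLp X 2 P) :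
    ∫ ω, X ω ^ 2 ∂P =
      ∫ ω, A (U ω) ^ 2 * X' ω ^ 2 ∂P + ∫ ω, B (U ω) ^ 2 * X'' ω ^ 2 ∂P
        + 2 * ∫ ω, A (U ω) * B (U ω) * (X' ω * X'' ω) ∂P
        + 2 * ∫ ω, A (U ω) * T (U ω) * X' ω ∂P + 2 * ∫ ω, B (U ω) * T (U ω) * X'' ω ∂P
        + ∫ ω, T (U ω) ^ 2 ∂P := by
  have hA := h.measurable_A
  have hB := h.measurable_B
  have hT := h.measurable_T
  have hAU := h.mem_A
  have hBU := h.mem_B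
  have hTU := h.mem_T
  have hsq : Integrable (fun ω => X ω ^ 2) P := hX.integrable_sq
  have i1 : Integrable (fun ω => A (U ω) ^ 2 * X' ω ^ 2) P :=
    h.integrable_comp_mul (g := fun s => A s ^ 2) (by fun_prop)
      (by filter_upwards [hAU] with ω hω using sq (A (U ω)) ▸ unitInterval.mul_mem hω hω)
      (h.identDistrib_left.sq.integrable_iff.2 hsq)
  have i2 : Integrable (fun ω => B (U ω) ^ 2 * X'' ω ^ 2) P :=
    h.integrable_comp_mul (g := fun s => B s ^ 2) (by fun_prop)
      (by filter_upwards [hBU] with ω hω using sq (B (U ω)) ▸ unitInterval.mul_mem hω hω)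
      (h.identDistrib_right.sq.integrable_iff.2 hsq)
  have i3 : Integrable (fun ω => A (U ω) * B (U ω) * (X' ω * X'' ω)) P :=
    h.integrable_comp_mul (g := fun s => A s * B s) (by fun_prop)
      (by filter_upwards [hAU, hBU] with ω hA hB using unitInterval.mul_mem hA hB)
      (h.indepFun_left_right.integrable_mul h.integrable_left h.integrable_right)
  have i4 : Integrable (fun ω => A (U ω) * T (U ω) * X' ω) P :=
    h.integrable_comp_mul (g := fun s => A s * T s) (by fun_prop)
      (by filter_upwards [hAU, hTU] with ω hA hT using unitInterval.mul_mem hA hT)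
      h.integrable_left
  have i5 : Integrable (fun ω => B (U ω) * T (U ω) * X'' ω) P :=
    h.integrable_comp_mul (g := fun s => B s * T s) (by fun_prop)
      (by filter_upwards [hBU, hTU] with ω hB hT using unitInterval.mul_mem hB hT)
      h.integrable_right
  have i6 : Integrable (fun ω => T (U ω) ^ 2) P :=
    .of_mem_Icc 0 1 ((hT.comp_aemeasurable h.aemeasurable_U).pow_const 2) <| by
      filter_upwards [hTU] with ω hω using sq (T (U ω)) ▸ unitInterval.mul_mem hω hω
  calc ∫ ω, X ω ^ 2 ∂P = ∫ ω, (A (U ω) * X' ω + B (U ω) * X'' ω + T (U ω)) ^ 2 ∂P :=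
        h.identDistrib_eq.sq.integral_eq
    _ = ∫ ω, A (U ω) ^ 2 * X' ω ^ 2 + B (U ω) ^ 2 * X'' ω ^ 2
          + 2 * (A (U ω) * B (U ω) * (X' ω * X'' ω)) + 2 * (A (U ω) * T (U ω) * X' ω)
          + 2 * (B (U ω) * T (U ω) * X'' ω) + T (U ω) ^ 2 ∂P := by
        congr 1; ext ω; ring
    _ = _ := by
        rw [integral_add (by fun_prop) i6, integral_add (by fun_prop) (by fun_prop),
          integral_add (by fun_prop) (by fun_prop), integral_add (by fun_prop) (by fun_prop),
          integral_add i1 i2, integral_const_mul, integral_const_mul, integral_const_mul]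

lemma integral_sq_eq [IsProbabilityMeasure P] (h : SolvesDistribEq P A B T U X X' X'')
    (hX : MemLp X 2 P) :
    ∫ ω, X ω ^ 2 ∂P =
      (∫ s, A s ^ 2 ∂P.map U + ∫ s, B s ^ 2 ∂P.map U) * ∫ ω, X ω ^ 2 ∂P
        + 2 * (∫ s, A s * B s ∂P.map U) * (∫ ω, X ω ∂P) ^ 2
        + 2 * (∫ s, A s * T s ∂P.map U + ∫ s, B s * T s ∂P.map U) * ∫ ω, X ω ∂P
        + ∫ s, T s ^ 2 ∂P.map U := by
  have hA := h.measurable_A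
  have hB := h.measurable_B
  have hT := h.measurable_T
  refine (h.integral_sq_eq_sum_integral hX).trans ?_
  rw [h.integral_mul_comp_left (g := fun s => A s ^ 2) (by fun_prop) (φ := fun x => x ^ 2)
      (by fun_prop),
    h.integral_mul_comp_right (g := fun s => B s ^ 2) (by fun_prop) (φ := fun x => x ^ 2)
      (by fun_prop),
    h.integral_mul_comp_mul (g := fun s => A s * B s) (by fun_prop),
    h.integral_mul_comp_left (g := fun s => A s * T s) (by fun_prop) (φ := fun x => x)
      measurable_id',
    h.integral_mul_comp_right (g := fun s => B s * T s) (by fun_prop) (φ := fun x => x)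
      measurable_id',
    h.integral_comp (g := fun s => T s ^ 2) (by fun_prop)]
  ring

end SolvesDistribEq

namespace Quicksort

def coeffLeft (c : ℝ) : ℝ → ℝ := fun u => ((1 - 2 * c) * u + c) ^ 2

def coeffRight (c : ℝ) : ℝ → ℝ := fun u => ((2 * c - 1) * u + (1 - c)) ^ 2

noncomputable def toll (c : ℝ) : ℝ → ℝ :=
  fun u => (1 - c) / 2 * (u ^ 2 + (1 - u) ^ 2) + c * u * (1 - u)

@[fun_prop]
lemma measurable_coeffLeft (c : ℝ) : Measurable (coeffLeft c) := by
  unfold coeffLeft; fun_prop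

@[fun_prop]
lemma measurable_coeffRight (c : ℝ) : Measurable (coeffRight c) := by
  unfold coeffRight; fun_prop

@[fun_prop]
lemma measurable_toll (c : ℝ) : Measurable (toll c) := by
  unfold toll; fun_prop

variable {c u : ℝ}

lemma coeffLeft_mem_Icc (hc : c ∈ Icc (0:ℝ) 1) (hu : u ∈ Icc (0:ℝ) 1) :
    coeffLeft c u ∈ Icc (0:ℝ) 1 := by
  obtain ⟨hc0, hc1⟩ := hc
  obtain ⟨hu0, hu1⟩ := hu
  have h : (1 - 2 * c) * u + c ∈ Icc (0:ℝ) 1 :=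
    ⟨by nlinarith [mul_nonneg hc0 (sub_nonneg.2 hu1)], by nlinarith [mul_nonneg hc0 hu0]⟩
  rw [coeffLeft, sq]; exact unitInterval.mul_mem h h

lemma coeffRight_mem_Icc (hc : c ∈ Icc (0:ℝ) 1) (hu : u ∈ Icc (0:ℝ) 1) :
    coeffRight c u ∈ Icc (0:ℝ) 1 := by
  obtain ⟨hc0, hc1⟩ := hc
  obtain ⟨hu0, hu1⟩ := hu
  have h : (2 * c - 1) * u + (1 - c) ∈ Icc (0:ℝ) 1 :=
    ⟨by nlinarith [mul_nonneg hc0 hu0], by nlinarith [mul_nonneg hc0 (sub_nonneg.2 hu1)]⟩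
  rw [coeffRight, sq]; exact unitInterval.mul_mem h h

lemma toll_mem_Icc (hc : c ∈ Icc (0:ℝ) 1) (hu : u ∈ Icc (0:ℝ) 1) :
    toll c u ∈ Icc (0:ℝ) 1 := by
  obtain ⟨hc0, hc1⟩ := hc
  obtain ⟨hu0, hu1⟩ := hu
  have hu' : 0 ≤ u * (1 - u) := mul_nonneg hu0 (sub_nonneg.2 hu1)
  constructor <;> simp only [toll] <;>
    nlinarith [mul_nonneg hc0 hu', mul_nonneg (sub_nonneg.2 hc1) hu']

lemma setIntegral_moments (c : ℝ) :
    ∫ u in Icc (0:ℝ) 1, coeffLeft c u = (1 - c + c ^ 2) / 3 ∧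
    ∫ u in Icc (0:ℝ) 1, coeffRight c u = (1 - c + c ^ 2) / 3 ∧
    ∫ u in Icc (0:ℝ) 1, toll c u = (2 - c) / 6 ∧
    ∫ u in Icc (0:ℝ) 1, coeffLeft c u ^ 2 = (1 - 3 * c + 4 * c ^ 2 - 2 * c ^ 3 + c ^ 4) / 5 ∧
    ∫ u in Icc (0:ℝ) 1, coeffRight c u ^ 2 = (1 - 3 * c + 4 * c ^ 2 - 2 * c ^ 3 + c ^ 4) / 5 ∧
    ∫ u in Icc (0:ℝ) 1, coeffLeft c u * coeffRight c u
      = (1 + 2 * c + 4 * c ^ 2 - 12 * c ^ 3 + 6 * c ^ 4) / 30 ∧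
    ∫ u in Icc (0:ℝ) 1, coeffLeft c u * toll c u = (7 - 12 * c + 14 * c ^ 2 - 6 * c ^ 3) / 60 ∧
    ∫ u in Icc (0:ℝ) 1, coeffRight c u * toll c u = (7 - 12 * c + 14 * c ^ 2 - 6 * c ^ 3) / 60 ∧
    ∫ u in Icc (0:ℝ) 1, toll c u ^ 2 = (7 - 8 * c + 3 * c ^ 2) / 60 := by
  simp only [integral_Icc_eq_integral_Ioc, ← intervalIntegral.integral_of_le zero_le_one,
    coeffLeft, coeffRight, toll]
  refine ⟨?_, ?_, ?_, ?_, ?_, ?_, ?_, ?_, ?_⟩ <;>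
  · ring_nf
    simp (disch := (apply Continuous.intervalIntegrable; fun_prop))
      [intervalIntegral.integral_add, intervalIntegral.integral_sub,
        intervalIntegral.integral_const_mul _ (fun x : ℝ => x)]
    ring

lemma mean_variance_of_moment_eqs {m s : ℝ} (hc : c ∈ Icc (0:ℝ) 1)
    (hm : m = ((1 - c + c ^ 2) / 3 + (1 - c + c ^ 2) / 3) * m + (2 - c) / 6)
    (hs : s =
      ((1 - 3 * c + 4 * c ^ 2 - 2 * c ^ 3 + c ^ 4) / 5
          + (1 - 3 * c + 4 * c ^ 2 - 2 * c ^ 3 + c ^ 4) / 5) * s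
        + 2 * ((1 + 2 * c + 4 * c ^ 2 - 12 * c ^ 3 + 6 * c ^ 4) / 30) * m ^ 2
        + 2 * ((7 - 12 * c + 14 * c ^ 2 - 6 * c ^ 3) / 60
          + (7 - 12 * c + 14 * c ^ 2 - 6 * c ^ 3) / 60) * m
        + (7 - 8 * c + 3 * c ^ 2) / 60) :
    m = (2 - c) / (2 * (1 + 2 * c - 2 * c ^ 2)) ∧
    s - m ^ 2 = (1 - c) ^ 2 * (1 - 2 * c) ^ 2
      / (4 * (1 + 2 * c - 2 * c ^ 2) ^ 2 * (3 + 6 * c - 8 * c ^ 2 + 4 * c ^ 3 - 2 * c ^ 4)) := by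
  obtain ⟨hc0, hc1⟩ := hc
  set D₁ := 1 + 2 * c - 2 * c ^ 2
  set D₂ := 3 + 6 * c - 8 * c ^ 2 + 4 * c ^ 3 - 2 * c ^ 4
  have hD₁ : 0 < D₁ := by nlinarith
  have hD₂ : 0 < D₂ := by nlinarith [mul_nonneg (sub_nonneg.2 hc1) hc0, pow_nonneg hc0 3]
  have h2m : 2 * D₁ * m = 2 - c := by linarith
  refine ⟨by rw [eq_div_iff (by positivity)]; linarith, ?_⟩
  rw [eq_div_iff (by positivity)]
  -- `20 D₁² hs` clears `1 - 2 E[A²] = D₂ / 5` and the `4 D₁²` of the denominator; `h2m` then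
  -- eliminates `m`.
  linear_combination 20 * D₁ ^ 2 * hs
    + (((1 + 2 * c + 4 * c ^ 2 - 12 * c ^ 3 + 6 * c ^ 4) / 3 - D₂) * (2 * D₁ * m + (2 - c))
      + 2 * (7 - 12 * c + 14 * c ^ 2 - 6 * c ^ 3) / 3 * D₁) * h2m

end Quicksort

/-- Let `c ∈ [0,1]` and let `X_c` be the (unique) integrable solution of
`X_c =law ((1-2c)U+c)² X_c' + ((2c-1)U+1-c)² X_c'' + T(c,U)` with
`T(c,u) = ((1-c)/2)(u² + (1-u)²) + c u(1-u)`, `U` uniform on `[0,1]`, and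
`X_c', X_c''` independent copies of `X_c` independent of `U`. Then
`E[X_c] = (2-c)/(2(1+2c-2c²))` and
`Var X_c = (1-c)²(1-2c)² / (4(1+2c-2c²)²(3+6c-8c²+4c³-2c⁴))`. -/
theorem quicksort_case1_limit_moments {Ω : Type*} [MeasurableSpace Ω] (P : Measure Ω)
    [IsProbabilityMeasure P] (c : ℝ) (hc : c ∈ Set.Icc (0:ℝ) 1)
    (U X X' X'' : Ω → ℝ)
    (hUm : Measurable U) (hXm : Measurable X) (hX'm : Measurable X')
    (hX''m : Measurable X'')
    (hU : Measure.map U P = volume.restrict (Set.Icc (0:ℝ) 1))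
    (hX' : Measure.map X' P = Measure.map X P)
    (hX'' : Measure.map X'' P = Measure.map X P)
    (hindep : iIndepFun ![X', X'', U] P)
    (hXint : Integrable X P)
    (heq : Measure.map X P = Measure.map (fun ω =>
      ((1 - 2*c) * U ω + c)^2 * X' ω + ((2*c - 1) * U ω + (1 - c))^2 * X'' ω
        + ((1 - c)/2 * ((U ω)^2 + (1 - U ω)^2) + c * U ω * (1 - U ω))) P) :
    ∫ ω, X ω ∂P = (2 - c) / (2 * (1 + 2*c - 2*c^2))
    ∧ variance X P =
        (1 - c)^2 * (1 - 2*c)^2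
          / (4 * (1 + 2*c - 2*c^2)^2 * (3 + 6*c - 8*c^2 + 4*c^3 - 2*c^4)) := by
  have hUI : ∀ᵐ ω ∂P, U ω ∈ Icc (0:ℝ) 1 :=
    ae_of_ae_map hUm.aemeasurable (hU ▸ ae_restrict_mem measurableSet_Icc)
  have h : SolvesDistribEq P (Quicksort.coeffLeft c) (Quicksort.coeffRight c) (Quicksort.toll c)
      U X X' X'' :=
    .of_iIndepFun (Quicksort.measurable_coeffLeft c) (Quicksort.measurable_coeffRight c)
      (Quicksort.measurable_toll c)
      (by filter_upwards [hUI] with ω hω using Quicksort.coeffLeft_mem_Icc hc hω)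
      (by filter_upwards [hUI] with ω hω using Quicksort.coeffRight_mem_Icc hc hω)
      (by filter_upwards [hUI] with ω hω using Quicksort.toll_mem_Icc hc hω)
      hUm hXm hX'm hX''m hX' hX'' hindep hXint heq
  obtain ⟨hA, hB, hT, hA2, hB2, hAB, hAT, hBT, hT2⟩ := Quicksort.setIntegral_moments c
  have hL2 : MemLp X 2 P := h.memLp_two (by rw [hU, hA, hB]; nlinarith [hc.1, hc.2])
  have hm := h.integral_eq
  have hs := h.integral_sq_eq hL2
  rw [hU, hA, hB, hT] at hm
  rw [hU, hA2, hB2, hAB, hAT, hBT, hT2] at hs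
  obtain ⟨hmean, hvar⟩ := Quicksort.mean_variance_of_moment_eqs hc hm hs
  exact ⟨hmean, (variance_eq_sub hL2).trans hvar⟩
end

section
/- Suppose four families of nonnegative reals a_{n,p}, b_{n,p}, γ_{k,n,p} (indexed by integers n ≥ 0, reals p ∈ (0,1), and 0 ≤ k ≤ n-1) satisfy a_{n,p} ≤ b_{n,p} + Σ_{k=0}^{n-1} γ_{k,n,p} a_{k,p}, and let F be a filter on ℕ×(0,1). Assume: (a) the a_{n,p} are bounded; (b) there exist Γ < 1 and V_0 ∈ F with Σ_{k=0}^{n-1} γ_{k,n,p} < Γ for all (n,p) ∈ V_0; (c) b_{n,p} → 0 along F; (d) for every V ∈ F, Σ_{k : (k,p)∉V} γ_{k,n,p} → 0 along F. Then a_{n,p} → 0 along F. -/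
open Filter Classical

open Topology

/-! Let `L` be the limsup of `a` along `F` and `ε > 0`, so that `V = {a < L + ε}` belongs to `F`.
Split the sum in the recursion into the indices `k` with `(k, p) ∈ V`, where `a_{k,p} < L + ε`
and the weights add up to less than `Γ`, and the remaining ones, where `a_{k,p} ≤ M` and the
weights eventually add up to at most `ε`. This gives `L ≤ (L + ε) Γ + (1 + M) ε`; letting
`ε → 0` yields `L ≤ L Γ`, hence `L ≤ 0` because `Γ < 1`. -/

theorem nonpos_of_forall_pos_le_mul_add {L Γ C : ℝ} (hΓ : Γ < 1)
    (h : ∀ ε > 0, L ≤ (L + ε) * Γ + C * ε) : L ≤ 0 := by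
  have hlim : Tendsto (fun ε => (L + ε) * Γ + C * ε) (𝓝[>] 0) (𝓝 (L * Γ)) := by
    refine (Continuous.tendsto' ?_ 0 _ (by simp)).mono_left nhdsWithin_le_nhds
    fun_prop
  have hLΓ : L ≤ L * Γ := ge_of_tendsto hlim (eventually_nhdsWithin_of_forall h)
  nlinarith

theorem Finset.sum_mul_le_sum_mul_add_sum_filter_not_mul {ι : Type*} (s : Finset ι)
    (p : ι → Prop) [DecidablePred p] {w x : ι → ℝ} {c M : ℝ} (hw : ∀ i ∈ s, 0 ≤ w i)
    (hc : 0 ≤ c) (hp : ∀ i ∈ s, p i → x i ≤ c) (hM : ∀ i ∈ s, x i ≤ M) :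
    ∑ i ∈ s, w i * x i ≤ (∑ i ∈ s, w i) * c + (∑ i ∈ s with ¬p i, w i) * M := by
  have hin : ∑ i ∈ s with p i, w i * x i ≤ (∑ i ∈ s, w i) * c :=
    calc ∑ i ∈ s with p i, w i * x i ≤ ∑ i ∈ s with p i, w i * c :=
          Finset.sum_le_sum fun i hi => by
            obtain ⟨his, hpi⟩ := Finset.mem_filter.mp hi
            exact mul_le_mul_of_nonneg_left (hp i his hpi) (hw i his)
      _ = (∑ i ∈ s with p i, w i) * c := (Finset.sum_mul _ _ _).symm
      _ ≤ (∑ i ∈ s, w i) * c := mul_le_mul_of_nonneg_right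
          (Finset.sum_le_sum_of_subset_of_nonneg (Finset.filter_subset p s) fun i hi _ => hw i hi)
          hc
  have hout : ∑ i ∈ s with ¬p i, w i * x i ≤ (∑ i ∈ s with ¬p i, w i) * M := by
    rw [Finset.sum_mul]
    exact Finset.sum_le_sum fun i hi => by
      have his := (Finset.mem_filter.mp hi).1
      exact mul_le_mul_of_nonneg_left (hM i his) (hw i his)
  rw [← Finset.sum_filter_add_sum_filter_not s p]
  exact add_le_add hin hout

theorem tendsto_zero_of_nonneg_of_limsup_nonpos {α : Type*} {F : Filter α} {f : α → ℝ}
    (hf : ∀ x, 0 ≤ f x) (hbdd : IsBoundedUnder (· ≤ ·) F f) (hL : limsup f F ≤ 0) :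
    Tendsto f F (𝓝 0) := by
  exact tendsto_order.2 ⟨fun ε hε => Eventually.of_forall fun x => hε.trans_le (hf x),
    fun ε hε => eventually_lt_of_limsup_lt (hL.trans_lt hε) hbdd⟩

section LimsupEstimate

variable {P : Type*} {F : Filter (ℕ × P)} [F.NeBot] {a b : ℕ → P → ℝ} {γ : ℕ → ℕ → P → ℝ}
  {M Γ ε : ℝ}

theorem limsup_le_of_le_add_sum (hε : 0 < ε) (ha : ∀ n p, 0 ≤ a n p) (hγ : ∀ k n p, 0 ≤ γ k n p)
    (hrec : ∀ n p, a n p ≤ b n p + ∑ k ∈ Finset.range n, γ k n p * a k p)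
    (hM : ∀ n p, a n p ≤ M)
    (hΓ : ∀ᶠ q in F, ∑ k ∈ Finset.range q.1, γ k q.1 q.2 ≤ Γ)
    (hb : ∀ᶠ q in F, b q.1 q.2 ≤ ε)
    (htail : ∀ V ∈ F, ∀ᶠ q in F,
      ∑ k ∈ Finset.range q.1 with (k, q.2) ∉ V, γ k q.1 q.2 ≤ ε) :
    limsup (fun q : ℕ × P => a q.1 q.2) F ≤
      (limsup (fun q : ℕ × P => a q.1 q.2) F + ε) * Γ + (1 + M) * ε := by
  set L := limsup (fun q : ℕ × P => a q.1 q.2) F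
  have hbdd : IsBoundedUnder (· ≤ ·) F (fun q : ℕ × P => a q.1 q.2) :=
    isBoundedUnder_of ⟨M, fun q => hM q.1 q.2⟩
  have hL : 0 ≤ L := le_limsup_of_frequently_le (Frequently.of_forall fun q => ha q.1 q.2) hbdd
  obtain ⟨⟨n₀, p₀⟩⟩ := F.nonempty_of_neBot
  have hM0 : 0 ≤ M := (ha n₀ p₀).trans (hM n₀ p₀)
  set V := {q : ℕ × P | a q.1 q.2 < L + ε}
  have hV : V ∈ F := eventually_lt_of_limsup_lt (by linarith) hbdd
  refine limsup_le_of_le (isBoundedUnder_of ⟨0, fun q => ha q.1 q.2⟩).isCoboundedUnder_le ?_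
  filter_upwards [hΓ, hb, htail V hV] with ⟨n, p⟩ hΓq hbq htailq
  have hsplit := Finset.sum_mul_le_sum_mul_add_sum_filter_not_mul (Finset.range n)
    (fun k => (k, p) ∈ V) (fun k _ => hγ k n p) (by linarith) (fun k _ hk => hk.le)
    (fun k _ => hM k p)
  calc a n p ≤ b n p + ∑ k ∈ Finset.range n, γ k n p * a k p := hrec n p
    _ ≤ ε + (Γ * (L + ε) + ε * M) := add_le_add hbq <| hsplit.trans <|
        add_le_add (mul_le_mul_of_nonneg_right hΓq (by linarith))
          (mul_le_mul_of_nonneg_right htailq hM0)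
    _ = (L + ε) * Γ + (1 + M) * ε := by ring

end LimsupEstimate

theorem roesler_filter_lemma_general
    (a b : ℕ → Set.Ioo (0:ℝ) 1 → ℝ) (γ : ℕ → ℕ → Set.Ioo (0:ℝ) 1 → ℝ)
    (F : Filter (ℕ × Set.Ioo (0:ℝ) 1))
    (ha_nonneg : ∀ n p, 0 ≤ a n p)
    (hγ_nonneg : ∀ k n p, 0 ≤ γ k n p)
    (hrec : ∀ n p, a n p ≤ b n p + ∑ k ∈ Finset.range n, γ k n p * a k p)
    (hbdd : ∃ M : ℝ, ∀ n p, a n p ≤ M)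
    (hΓ : ∃ Γ : ℝ, Γ < 1 ∧ ∃ V₀ ∈ F, ∀ q ∈ V₀, ∑ k ∈ Finset.range q.1, γ k q.1 q.2 < Γ)
    (hb : Tendsto (fun q : ℕ × Set.Ioo (0:ℝ) 1 => b q.1 q.2) F (nhds 0))
    (hγ : ∀ V ∈ F, Tendsto (fun q : ℕ × Set.Ioo (0:ℝ) 1 =>
        ∑ k ∈ (Finset.range q.1).filter (fun k => (k, q.2) ∉ V), γ k q.1 q.2)
      F (nhds 0)) :
    Tendsto (fun q : ℕ × Set.Ioo (0:ℝ) 1 => a q.1 q.2) F (nhds 0) := by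
  rcases F.eq_or_neBot with rfl | hF
  · exact tendsto_bot
  obtain ⟨M, hM⟩ := hbdd
  obtain ⟨Γ, hΓ1, V₀, hV₀, hΓV₀⟩ := hΓ
  have hΓev : ∀ᶠ q in F, ∑ k ∈ Finset.range q.1, γ k q.1 q.2 ≤ Γ :=
    eventually_of_mem hV₀ fun q hq => (hΓV₀ q hq).le
  refine tendsto_zero_of_nonneg_of_limsup_nonpos (fun q => ha_nonneg q.1 q.2)
    (isBoundedUnder_of ⟨M, fun q => hM q.1 q.2⟩) ?_
  exact nonpos_of_forall_pos_le_mul_add hΓ1 fun ε hε =>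
    limsup_le_of_le_add_sum hε ha_nonneg hγ_nonneg hrec hM hΓev (hb.eventually (ge_mem_nhds hε))
      fun V hV => (hγ V hV).eventually (ge_mem_nhds hε)

/-- Rösler-type convergence lemma along a filter. If
`a_{n,p} ≤ b_{n,p} + Σ_{k=0}^{n-1} γ_{k,n,p} a_{k,p}` for nonnegative families, the
`a_{n,p}` are bounded, eventually `Σ_k γ_{k,n,p} < Γ < 1`, `b_{n,p} → 0` along a filter
`F`, and for every `V ∈ F` the sum `Σ_{k : (k,p)∉V} γ_{k,n,p} → 0` along `F`, then
`a_{n,p} → 0` along `F`. -/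
theorem roesler_filter_lemma
    (a b : ℕ → Set.Ioo (0:ℝ) 1 → ℝ) (γ : ℕ → ℕ → Set.Ioo (0:ℝ) 1 → ℝ)
    (F : Filter (ℕ × Set.Ioo (0:ℝ) 1))
    (ha_nonneg : ∀ n p, 0 ≤ a n p) (hb_nonneg : ∀ n p, 0 ≤ b n p)
    (hγ_nonneg : ∀ k n p, 0 ≤ γ k n p)
    (hrec : ∀ n p, a n p ≤ b n p + ∑ k ∈ Finset.range n, γ k n p * a k p)
    (hbdd : ∃ M : ℝ, ∀ n p, a n p ≤ M)
    (hΓ : ∃ Γ : ℝ, Γ < 1 ∧ ∃ V₀ ∈ F, ∀ q ∈ V₀, ∑ k ∈ Finset.range q.1, γ k q.1 q.2 < Γ)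
    (hb : Tendsto (fun q : ℕ × Set.Ioo (0:ℝ) 1 => b q.1 q.2) F (nhds 0))
    (hγ : ∀ V ∈ F, Tendsto (fun q : ℕ × Set.Ioo (0:ℝ) 1 =>
        ∑ k ∈ (Finset.range q.1).filter (fun k => (k, q.2) ∉ V), γ k q.1 q.2)
      F (nhds 0)) :
    Tendsto (fun q : ℕ × Set.Ioo (0:ℝ) 1 => a q.1 q.2) F (nhds 0) :=
  roesler_filter_lemma_general a b γ F ha_nonneg hγ_nonneg hrec hbdd hΓ hb hγ
end
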